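/- arXiv:1901.09455 — 11 statements merged into one kernel-verified Lean document; each statement's English description precedes it below -/
import Mathlib

section
/- Let γ ∈ [0,1) and suppose ‖Π_d P_π‖_{d_π} < 1/γ, where ‖·‖_{d_π} also denotes the induced operator norm with respect to the d_π-weighted norm. Suppose V̂ ∈ ℝ^S satisfies the projected Bellman equation V̂ = Π_d (r_π + γ P_π V̂). Then ‖V̂ − V^π‖_{d_π} ≤ ‖Π_d V^π − V^π‖_{d_π} / (1 − γ ‖Π_d P_π‖_{d_π}). -/
open Matrix Finset

/-- Fixed-point quality bound for the projected Bellman equation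
(Theorem 1, based on Munos 2003). -/
theorem projected_bellman_fixed_point_error
    {S : Type*} [Fintype S] [Nonempty S]
    -- `P` is a row-stochastic matrix (entry `P s s'` is `P(s' | s)`)
    (P : Matrix S S ℝ)
    (hP0 : ∀ s s', 0 ≤ P s s') (hP1 : ∀ s, ∑ s', P s s' = 1)
    -- `dπ` is a strictly positive stationary probability vector of `P`
    (dπ : S → ℝ) (hdπpos : ∀ s, 0 < dπ s) (hdπsum : ∑ s, dπ s = 1)
    (hdπstat : Pᵀ *ᵥ dπ = dπ)
    -- reward vector and discount factor
    (r : S → ℝ) (γ : ℝ) (hγ0 : 0 ≤ γ) (hγ1 : γ < 1)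
    -- `Vπ` is the solution of the Bellman equation
    (Vπ : S → ℝ) (hVπ : Vπ = r + γ • (P *ᵥ Vπ))
    -- `Φ` is a linear subspace, `d` a strictly positive probability vector
    (Φ : Submodule ℝ (S → ℝ))
    (d : S → ℝ) (hdpos : ∀ s, 0 < d s) (hdsum : ∑ s, d s = 1)
    -- `proj` is the orthogonal projection onto `Φ` w.r.t. the `d`-weighted inner product
    (proj : (S → ℝ) →ₗ[ℝ] (S → ℝ))
    (hprojmem : ∀ x, proj x ∈ Φ)
    (hprojorth : ∀ x, ∀ y ∈ Φ, ∑ s, d s * (x s - proj x s) * y s = 0)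
    -- `K` is the induced operator norm of `Π_d P` w.r.t. the `dπ`-weighted norm,
    -- given as an upper bound on the operator's action, with `γ * K < 1`
    (K : ℝ) (hK0 : 0 ≤ K)
    (hKbound : ∀ x : S → ℝ,
      Real.sqrt (∑ s, dπ s * (proj (P *ᵥ x) s) ^ 2)
        ≤ K * Real.sqrt (∑ s, dπ s * (x s) ^ 2))
    (hγK : γ * K < 1)
    -- `Vhat` satisfies the projected Bellman equation
    (Vhat : S → ℝ) (hVhat : Vhat = proj (r + γ • (P *ᵥ Vhat))) :
    Real.sqrt (∑ s, dπ s * ((Vhat - Vπ) s) ^ 2)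
      ≤ Real.sqrt (∑ s, dπ s * ((proj Vπ - Vπ) s) ^ 2) / (1 - γ * K) := by
  set N : (S → ℝ) → ℝ := fun x => Real.sqrt (∑ s, dπ s * (x s) ^ 2) with hNdef
  have hsumnn : ∀ x : S → ℝ, 0 ≤ ∑ s, dπ s * (x s) ^ 2 := fun x =>
    Finset.sum_nonneg fun s _ => mul_nonneg (hdπpos s).le (sq_nonneg _)
  have hNsq : ∀ x, (N x) ^ 2 = ∑ s, dπ s * (x s) ^ 2 := fun x =>
    Real.sq_sqrt (hsumnn x)
  have hNnn : ∀ x, 0 ≤ N x := fun _ => Real.sqrt_nonneg _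
  -- Cauchy-Schwarz in the weighted inner product
  have hCS : ∀ x y : S → ℝ, ∑ s, dπ s * x s * y s ≤ N x * N y := by
    intro x y
    have h := Finset.sum_mul_sq_le_sq_mul_sq Finset.univ
      (fun s => Real.sqrt (dπ s) * x s) (fun s => Real.sqrt (dπ s) * y s)
    have e1 : ∀ s : S, (Real.sqrt (dπ s) * x s) * (Real.sqrt (dπ s) * y s)
        = dπ s * x s * y s := by
      intro s
      rw [show Real.sqrt (dπ s) * x s * (Real.sqrt (dπ s) * y s)
        = (Real.sqrt (dπ s) * Real.sqrt (dπ s)) * (x s * y s) by ring,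
        Real.mul_self_sqrt (hdπpos s).le]; ring
    have e2 : ∀ s : S, (Real.sqrt (dπ s) * x s) ^ 2 = dπ s * (x s) ^ 2 := by
      intro s; rw [mul_pow, Real.sq_sqrt (hdπpos s).le]
    have e3 : ∀ s : S, (Real.sqrt (dπ s) * y s) ^ 2 = dπ s * (y s) ^ 2 := by
      intro s; rw [mul_pow, Real.sq_sqrt (hdπpos s).le]
    simp only [e1, e2, e3] at h
    have h' : (∑ s, dπ s * x s * y s) ^ 2 ≤ (N x * N y) ^ 2 := by
      rw [mul_pow, hNsq, hNsq]; exact h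
    calc ∑ s, dπ s * x s * y s ≤ |∑ s, dπ s * x s * y s| := le_abs_self _
      _ = Real.sqrt ((∑ s, dπ s * x s * y s) ^ 2) := (Real.sqrt_sq_eq_abs _).symm
      _ ≤ Real.sqrt ((N x * N y) ^ 2) := Real.sqrt_le_sqrt h'
      _ = N x * N y := Real.sqrt_sq (mul_nonneg (hNnn x) (hNnn y))
  -- triangle inequality
  have hNadd : ∀ x y : S → ℝ, N (x + y) ≤ N x + N y := by
    intro x y
    have hsq : (N (x + y)) ^ 2 ≤ (N x + N y) ^ 2 := by
      rw [hNsq]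
      have : ∑ s, dπ s * ((x + y) s) ^ 2
          = (∑ s, dπ s * (x s) ^ 2) + 2 * (∑ s, dπ s * x s * y s)
            + (∑ s, dπ s * (y s) ^ 2) := by
        rw [Finset.mul_sum, ← Finset.sum_add_distrib, ← Finset.sum_add_distrib]
        apply Finset.sum_congr rfl; intro s _
        simp only [Pi.add_apply]; ring
      rw [this, ← hNsq, ← hNsq]
      have := hCS x y
      nlinarith [hNnn x, hNnn y]
    calc N (x + y) = Real.sqrt ((N (x + y)) ^ 2) :=
          (Real.sqrt_sq (hNnn _)).symm
      _ ≤ Real.sqrt ((N x + N y) ^ 2) := Real.sqrt_le_sqrt hsq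
      _ = N x + N y := Real.sqrt_sq (add_nonneg (hNnn x) (hNnn y))
  -- homogeneity
  have hNsmul : ∀ (c : ℝ) (x : S → ℝ), N (c • x) = |c| * N x := by
    intro c x
    rw [hNdef]
    simp only [Pi.smul_apply, smul_eq_mul, mul_pow]
    rw [show (∑ s, dπ s * (c ^ 2 * (x s) ^ 2)) = c ^ 2 * ∑ s, dπ s * (x s) ^ 2 by
      rw [Finset.mul_sum]; apply Finset.sum_congr rfl; intro s _; ring,
      Real.sqrt_mul (sq_nonneg c), Real.sqrt_sq_eq_abs]
  -- key decomposition
  have hkey : Vhat - Vπ = (proj Vπ - Vπ) + γ • (proj (P *ᵥ (Vhat - Vπ))) := by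
    have hproj : proj Vπ = proj r + γ • proj (P *ᵥ Vπ) := by
      conv_lhs => rw [hVπ]
      rw [map_add, _root_.map_smul]
    have hhat : Vhat = proj r + γ • proj (P *ᵥ Vhat) := by
      conv_lhs => rw [hVhat]
      rw [map_add, _root_.map_smul]
    have hmv : P *ᵥ (Vhat - Vπ) = P *ᵥ Vhat - P *ᵥ Vπ := Matrix.mulVec_sub P _ _
    rw [hmv, map_sub, smul_sub]
    nth_rewrite 1 [hhat]
    nth_rewrite 1 [hproj]
    abel
  -- contraction-style inequality
  have hbound : N (Vhat - Vπ) ≤ N (proj Vπ - Vπ) + γ * K * N (Vhat - Vπ) := by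
    calc N (Vhat - Vπ) = N ((proj Vπ - Vπ) + γ • (proj (P *ᵥ (Vhat - Vπ)))) := by
          rw [← hkey]
      _ ≤ N (proj Vπ - Vπ) + N (γ • (proj (P *ᵥ (Vhat - Vπ)))) := hNadd _ _
      _ = N (proj Vπ - Vπ) + γ * N (proj (P *ᵥ (Vhat - Vπ))) := by
          rw [hNsmul, abs_of_nonneg hγ0]
      _ ≤ N (proj Vπ - Vπ) + γ * (K * N (Vhat - Vπ)) := by
          have := hKbound (Vhat - Vπ)
          have h2 : N (proj (P *ᵥ (Vhat - Vπ))) ≤ K * N (Vhat - Vπ) := this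
          nlinarith
      _ = N (proj Vπ - Vπ) + γ * K * N (Vhat - Vπ) := by ring
  have hden : 0 < 1 - γ * K := by linarith
  have hfin : N (Vhat - Vπ) ≤ N (proj Vπ - Vπ) / (1 - γ * K) := by
    rw [le_div_iff₀ hden]
    nlinarith [hNnn (Vhat - Vπ)]
  exact hfin
end

section
/- Suppose P_π is primitive with unique strictly positive stationary distribution d_π, and let c⁰ ∈ ℝ^S have nonnegative entries summing to 1. Then the iterates c^{k+1} = Y c^k converge (entrywise, as k → ∞) to C · (d_π/d_μ), where C = Σ_s d_μ(s) c⁰(s) is a strictly positive scalar and d_π/d_μ is the vector with entries d_π(s)/d_μ(s). -/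
open Matrix Finset Filter Topology

/-- Sum preservation under multiplication by the transpose of a row-stochastic matrix. -/
lemma cop_aux_sum_mulVec {S : Type*} [Fintype S] (Q : Matrix S S ℝ)
    (hQ1 : ∀ s, ∑ s', Q s s' = 1) (e : S → ℝ) :
    ∑ s', (Qᵀ *ᵥ e) s' = ∑ s, e s := by
  simp only [Matrix.mulVec, dotProduct, Matrix.transpose_apply]
  rw [Finset.sum_comm]
  simp [← Finset.sum_mul, hQ1]

/-- Doeblin contraction in ℓ¹ for zero-sum vectors. -/
lemma cop_aux_contract {S : Type*} [Fintype S] (Q : Matrix S S ℝ)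
    (hQ1 : ∀ s, ∑ s', Q s s' = 1) (π : S → ℝ) (hπ1 : ∑ s, π s = 1)
    (ε : ℝ) (hεQ : ∀ s s', ε * π s' ≤ Q s s')
    (e : S → ℝ) (he : ∑ s, e s = 0) :
    ∑ s', |(Qᵀ *ᵥ e) s'| ≤ (1 - ε) * ∑ s, |e s| := by
  have key : ∀ s', (Qᵀ *ᵥ e) s' = ∑ s, (Q s s' - ε * π s') * e s := by
    intro s'
    have h1 : ∑ s, (Q s s' - ε * π s') * e s
        = (∑ s, Q s s' * e s) - (ε * π s') * ∑ s, e s := by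
      rw [Finset.mul_sum, ← Finset.sum_sub_distrib]
      exact Finset.sum_congr rfl fun s _ => by ring
    simp only [Matrix.mulVec, dotProduct, Matrix.transpose_apply]
    rw [h1, he, mul_zero, sub_zero]
  have hbd : ∀ s', |(Qᵀ *ᵥ e) s'| ≤ ∑ s, (Q s s' - ε * π s') * |e s| := by
    intro s'
    rw [key s']
    refine le_trans (Finset.abs_sum_le_sum_abs _ _) (Finset.sum_le_sum fun s _ => ?_)
    rw [abs_mul, abs_of_nonneg (sub_nonneg.mpr (hεQ s s'))]
  calc ∑ s', |(Qᵀ *ᵥ e) s'| ≤ ∑ s', ∑ s, (Q s s' - ε * π s') * |e s| :=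
        Finset.sum_le_sum fun s' _ => hbd s'
    _ = ∑ s, (∑ s', (Q s s' - ε * π s')) * |e s| := by
        rw [Finset.sum_comm]
        exact Finset.sum_congr rfl fun s _ => by rw [Finset.sum_mul]
    _ = (1 - ε) * ∑ s, |e s| := by
        rw [Finset.mul_sum]
        refine Finset.sum_congr rfl fun s _ => ?_
        rw [Finset.sum_sub_distrib, hQ1, ← Finset.mul_sum, hπ1, mul_one]

/-- Convergence of the COP operator iterates (Theorem 2). -/
theorem cop_operator_convergence
    {S : Type*} [Fintype S] [Nonempty S] [DecidableEq S]
    -- `P` is a row-stochastic matrix (entry `P s s'` is `P(s' | s)`)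
    (P : Matrix S S ℝ)
    (hP0 : ∀ s s', 0 ≤ P s s') (hP1 : ∀ s, ∑ s', P s s' = 1)
    -- `P` is primitive (ergodicity assumption)
    (hprim : ∃ N : ℕ, 1 ≤ N ∧ ∀ s s', 0 < (P ^ N) s s')
    -- `dπ` is the unique strictly positive stationary probability vector of `P`
    (dπ : S → ℝ) (hdπpos : ∀ s, 0 < dπ s) (hdπsum : ∑ s, dπ s = 1)
    (hdπstat : Pᵀ *ᵥ dπ = dπ)
    (hdπuniq : ∀ d : S → ℝ, (∀ s, 0 ≤ d s) → ∑ s, d s = 1 → Pᵀ *ᵥ d = d → d = dπ)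
    -- `dμ` is a strictly positive probability vector
    (dμ : S → ℝ) (hdμpos : ∀ s, 0 < dμ s) (hdμsum : ∑ s, dμ s = 1)
    -- `c⁰` has nonnegative entries summing to 1
    (c0 : S → ℝ) (hc00 : ∀ s, 0 ≤ c0 s) (hc0sum : ∑ s, c0 s = 1)
    -- the iterates `c^{k+1} = Y c^k` of the COP operator `Y = D_{dμ}⁻¹ Pᵀ D_{dμ}`
    (c : ℕ → S → ℝ) (hc0' : c 0 = c0)
    (hcsucc : ∀ k, c (k + 1) =
      (Matrix.diagonal (fun s => (dμ s)⁻¹) * Pᵀ * Matrix.diagonal dμ) *ᵥ c k) :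
    0 < ∑ s, dμ s * c0 s ∧
    ∀ s, Tendsto (fun k => c k s) atTop
      (𝓝 ((∑ t, dμ t * c0 t) * (dπ s / dμ s))) := by
  obtain ⟨N, hN1, hNpos⟩ := hprim
  set C : ℝ := ∑ t, dμ t * c0 t with hC
  -- positivity of C
  have hCpos : 0 < C := by
    obtain ⟨s0, hs0⟩ : ∃ s, 0 < c0 s := by
      by_contra h
      push_neg at h
      have : (∑ s, c0 s) ≤ 0 := Finset.sum_nonpos fun s _ => h s
      linarith [hc0sum]
    exact Finset.sum_pos' (fun t _ => mul_nonneg (hdμpos t).le (hc00 t))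
      ⟨s0, Finset.mem_univ s0, mul_pos (hdμpos s0) hs0⟩
  refine ⟨hCpos, ?_⟩
  -- row sums of powers of P
  have hPk1 : ∀ (m : ℕ) (s : S), ∑ s', (P ^ m) s s' = 1 := by
    intro m
    induction m with
    | zero => intro s; simp [Matrix.one_apply]
    | succ m ih =>
      intro s
      rw [pow_succ]
      simp only [Matrix.mul_apply]
      rw [Finset.sum_comm]
      simp [← Finset.mul_sum, hP1, ih]
  -- the conjugated iterates
  set v0 : S → ℝ := fun s => dμ s * c0 s with hv0
  set f : ℕ → S → ℝ := fun k => (Pᵀ ^ k) *ᵥ v0 with hf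
  have hfsucc : ∀ k, f (k + 1) = Pᵀ *ᵥ f k := by
    intro k
    show Pᵀ ^ (k + 1) *ᵥ v0 = Pᵀ *ᵥ (Pᵀ ^ k *ᵥ v0)
    rw [Matrix.mulVec_mulVec, ← pow_succ']
  have hcf : ∀ k, c k = fun s => (dμ s)⁻¹ * f k s := by
    intro k
    induction k with
    | zero =>
      funext s
      simp only [hc0', hf, pow_zero, Matrix.one_mulVec, hv0]
      rw [← mul_assoc, inv_mul_cancel₀ (hdμpos s).ne', one_mul]
    | succ k ih =>
      rw [hcsucc k, ih]
      funext s
      have hdiag : (Matrix.diagonal dμ) *ᵥ (fun s => (dμ s)⁻¹ * f k s) = f k := by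
        funext t
        rw [Matrix.mulVec_diagonal, ← mul_assoc, mul_inv_cancel₀ (hdμpos t).ne', one_mul]
      rw [← Matrix.mulVec_mulVec, ← Matrix.mulVec_mulVec, hdiag, Matrix.mulVec_diagonal,
        ← hfsucc k]
  -- the error terms
  set e : ℕ → S → ℝ := fun k s => f k s - C * dπ s with he
  have hesucc : ∀ k, e (k + 1) = Pᵀ *ᵥ e k := by
    intro k
    funext s
    have : (Pᵀ *ᵥ (fun s => f k s - C * dπ s)) s
        = (Pᵀ *ᵥ f k) s - C * (Pᵀ *ᵥ dπ) s := by
      simp only [Matrix.mulVec, dotProduct, Finset.mul_sum, ← Finset.sum_sub_distrib]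
      exact Finset.sum_congr rfl fun t _ => by ring
    simp only [he]
    rw [this, hdπstat, hfsucc k]
  have hepow : ∀ k, e k = (Pᵀ ^ k) *ᵥ e 0 := by
    intro k
    induction k with
    | zero => simp
    | succ k ih => rw [hesucc k, ih, Matrix.mulVec_mulVec, ← pow_succ']
  -- sum of e k is zero
  have hfsum : ∀ k, ∑ s, f k s = C := by
    intro k
    induction k with
    | zero => simp [hf, hv0, hC]
    | succ k ih => rw [hfsucc k, cop_aux_sum_mulVec P hP1, ih]
  have hesum : ∀ k, ∑ s, e k s = 0 := by
    intro k
    simp only [he]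
    rw [Finset.sum_sub_distrib, hfsum k, ← Finset.mul_sum, hdπsum, mul_one, sub_self]
  -- dπ entries are at most 1
  have hdπle1 : ∀ s, dπ s ≤ 1 := by
    intro s
    calc dπ s ≤ ∑ t, dπ t :=
          Finset.single_le_sum (fun t _ => (hdπpos t).le) (Finset.mem_univ s)
      _ = 1 := hdπsum
  -- the Doeblin constant
  obtain ⟨p, -, hpmin⟩ := Finset.exists_min_image (Finset.univ : Finset (S × S))
    (fun q => (P ^ N) q.1 q.2) ⟨(Classical.arbitrary S, Classical.arbitrary S), Finset.mem_univ _⟩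
  set ε : ℝ := (P ^ N) p.1 p.2 with hε
  have hεpos : 0 < ε := hNpos p.1 p.2
  have hεle : ∀ s s', ε ≤ (P ^ N) s s' := fun s s' => hpmin (s, s') (Finset.mem_univ _)
  have hε1 : ε ≤ 1 := by
    have h := hεle p.1 p.1
    have h2 : (P ^ N) p.1 p.1 ≤ ∑ s', (P ^ N) p.1 s' :=
      Finset.single_le_sum (fun t _ => (hNpos p.1 t).le) (Finset.mem_univ _)
    rw [hPk1 N p.1] at h2
    linarith
  have hεminor : ∀ s s', ε * dπ s' ≤ (P ^ N) s s' := by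
    intro s s'
    calc ε * dπ s' ≤ ε * 1 := by
          exact mul_le_mul_of_nonneg_left (hdπle1 s') hεpos.le
      _ = ε := mul_one ε
      _ ≤ (P ^ N) s s' := hεle s s'
  -- the ℓ¹ norms
  set a : ℕ → ℝ := fun k => ∑ s, |e k s| with ha
  have hanneg : ∀ k, 0 ≤ a k := fun k => Finset.sum_nonneg fun s _ => abs_nonneg _
  have hastep : ∀ k, a (k + 1) ≤ a k := by
    intro k
    have := cop_aux_contract P hP1 dπ hdπsum 0 (fun s s' => by simpa using hP0 s s')
      (e k) (hesum k)
    rw [← hesucc k] at this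
    simpa using this
  have haanti : Antitone a := antitone_nat_of_succ_le hastep
  have haN : ∀ k, a (k + N) ≤ (1 - ε) * a k := by
    intro k
    have heN : e (k + N) = (P ^ N)ᵀ *ᵥ e k := by
      rw [hepow (k + N), hepow k, Matrix.mulVec_mulVec, Matrix.transpose_pow, ← pow_add,
        add_comm]
    have := cop_aux_contract (P ^ N) (hPk1 N) dπ hdπsum ε hεminor (e k) (hesum k)
    rw [← heN] at this
    exact this
  have hgeo : ∀ m, a (N * m) ≤ (1 - ε) ^ m * a 0 := by
    intro m
    induction m with
    | zero => simp
    | succ m ih =>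
      have h1 : a (N * (m + 1)) = a (N * m + N) := by ring_nf
      rw [h1]
      calc a (N * m + N) ≤ (1 - ε) * a (N * m) := haN (N * m)
        _ ≤ (1 - ε) * ((1 - ε) ^ m * a 0) :=
            mul_le_mul_of_nonneg_left ih (by linarith)
        _ = (1 - ε) ^ (m + 1) * a 0 := by ring
  have hbound : ∀ k, a k ≤ (1 - ε) ^ (k / N) * a 0 := by
    intro k
    calc a k ≤ a (N * (k / N)) := haanti (Nat.mul_div_le k N)
      _ ≤ (1 - ε) ^ (k / N) * a 0 := hgeo (k / N)
  -- geometric decay to zero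
  have hgeo0 : Tendsto (fun k : ℕ => (1 - ε) ^ (k / N) * a 0) atTop (𝓝 0) := by
    have h1 : Tendsto (fun m : ℕ => (1 - ε) ^ m) atTop (𝓝 0) :=
      tendsto_pow_atTop_nhds_zero_of_lt_one (by linarith) (by linarith)
    have h2 : Tendsto (fun k : ℕ => k / N) atTop atTop := by
      apply Filter.tendsto_atTop_atTop.mpr
      intro b
      refine ⟨b * N, fun k hk => ?_⟩
      rw [Nat.le_div_iff_mul_le (by omega)]
      omega
    have h3 := (h1.comp h2).mul_const (a 0)
    simpa using h3
  have haten : Tendsto a atTop (𝓝 0) :=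
    squeeze_zero hanneg hbound hgeo0
  -- per-entry convergence
  intro s
  have heabs : ∀ k, |e k s| ≤ a k := fun k =>
    Finset.single_le_sum (fun t _ => abs_nonneg (e k t)) (Finset.mem_univ s)
  have hetend : Tendsto (fun k => e k s) atTop (𝓝 0) :=
    squeeze_zero_norm (fun k => by simpa [Real.norm_eq_abs] using heabs k) haten
  have hftend : Tendsto (fun k => f k s) atTop (𝓝 (C * dπ s)) := by
    have := hetend.add_const (C * dπ s)
    simpa [he] using this
  have hctend : Tendsto (fun k => c k s) atTop (𝓝 ((dμ s)⁻¹ * (C * dπ s))) := by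
    have h1 := hftend.const_mul (dμ s)⁻¹
    have h2 : (fun k => c k s) = fun k => (dμ s)⁻¹ * f k s := by
      funext k
      rw [hcf k]
    rw [h2]
    exact h1
  have : (dμ s)⁻¹ * (C * dπ s) = C * (dπ s / dμ s) := by
    rw [div_eq_mul_inv]
    ring
  rw [← this]
  exact hctend
end

section
/- Suppose P_π is primitive with unique strictly positive stationary distribution d_π. Define the normalized COP operator Ȳ on the set of vectors c ≥ 0 with Σ_s d_μ(s) c(s) = 1 by Ȳ c = (Y c) / (Σ_s d_μ(s) (Y c)(s)). Then the ratio vector d_π/d_μ is the unique fixed point of Ȳ in this set, and for any c⁰ ≥ 0 with Σ_s d_μ(s) c⁰(s) = 1, the iterates c^{k+1} = Ȳ c^k converge entrywise to d_π/d_μ. -/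
open Matrix Finset Filter Topology
set_option linter.unusedSectionVars false

section aux
variable {S : Type*} [Fintype S] [Nonempty S] [DecidableEq S]

lemma copAux_tmul (P : Matrix S S ℝ) (w : S → ℝ) (s : S) :
    (Pᵀ *ᵥ w) s = ∑ t, P t s * w t := by
  simp [Matrix.mulVec, dotProduct, Matrix.transpose_apply]

lemma copAux_sum (P : Matrix S S ℝ) (hP1 : ∀ s, ∑ s', P s s' = 1) (w : S → ℝ) :
    ∑ s, (Pᵀ *ᵥ w) s = ∑ t, w t := by
  simp only [copAux_tmul]
  rw [Finset.sum_comm]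
  simp [← Finset.sum_mul, hP1]

lemma copAux_l1 (P : Matrix S S ℝ) (hP0 : ∀ s s', 0 ≤ P s s')
    (hP1 : ∀ s, ∑ s', P s s' = 1) (v : S → ℝ) :
    ∑ s, |(Pᵀ *ᵥ v) s| ≤ ∑ s, |v s| := by
  calc ∑ s, |(Pᵀ *ᵥ v) s| ≤ ∑ s, ∑ t, P t s * |v t| := by
        refine Finset.sum_le_sum fun s _ => ?_
        rw [copAux_tmul]
        refine (Finset.abs_sum_le_sum_abs _ _).trans ?_
        refine Finset.sum_le_sum fun t _ => ?_
        rw [abs_mul, abs_of_nonneg (hP0 t s)]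
    _ = ∑ t, |v t| := by
        rw [Finset.sum_comm]
        simp [← Finset.sum_mul, hP1]

lemma copAux_pow_stoch (P : Matrix S S ℝ) (hP0 : ∀ s s', 0 ≤ P s s')
    (hP1 : ∀ s, ∑ s', P s s' = 1) (N : ℕ) :
    (∀ s s', 0 ≤ (P ^ N) s s') ∧ (∀ s, ∑ s', (P ^ N) s s' = 1) := by
  induction N with
  | zero => simp [Matrix.one_apply]; intro s s'; positivity
  | succ n ih =>
    constructor
    · intro s s'
      rw [pow_succ, Matrix.mul_apply]
      exact Finset.sum_nonneg fun t _ => mul_nonneg (ih.1 s t) (hP0 t s')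
    · intro s
      simp only [pow_succ, Matrix.mul_apply]
      rw [Finset.sum_comm]
      simp [← Finset.mul_sum, hP1, ih.2 s]

lemma copAux_contraction (Q : Matrix S S ℝ) (hQpos : ∀ t s, 0 < Q t s)
    (hQ1 : ∀ t, ∑ s, Q t s = 1) :
    ∃ δ : ℝ, 0 < δ ∧ δ ≤ 1 ∧ ∀ v : S → ℝ, ∑ s, v s = 0 →
      ∑ s, |(Qᵀ *ᵥ v) s| ≤ (1 - δ) * ∑ s, |v s| := by
  have hne : (Finset.univ : Finset S).Nonempty := Finset.univ_nonempty
  set m : S → ℝ := fun s => Finset.univ.inf' hne (fun t => Q t s) with hm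
  have hmle : ∀ t s, m s ≤ Q t s := fun t s => Finset.inf'_le _ (Finset.mem_univ t)
  have hmpos : ∀ s, 0 < m s := fun s =>
    (Finset.lt_inf'_iff hne).2 fun t _ => hQpos t s
  refine ⟨∑ s, m s, Finset.sum_pos (fun s _ => hmpos s) hne, ?_, ?_⟩
  · obtain ⟨t0⟩ := (inferInstance : Nonempty S)
    calc ∑ s, m s ≤ ∑ s, Q t0 s := Finset.sum_le_sum fun s _ => hmle t0 s
      _ = 1 := hQ1 t0
  · intro v hv
    have key : ∀ s, (Qᵀ *ᵥ v) s = ∑ t, (Q t s - m s) * v t := by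
      intro s
      rw [copAux_tmul]
      simp only [sub_mul, Finset.sum_sub_distrib, ← Finset.mul_sum, hv, mul_zero, sub_zero]
    calc ∑ s, |(Qᵀ *ᵥ v) s| ≤ ∑ s, ∑ t, (Q t s - m s) * |v t| := by
          refine Finset.sum_le_sum fun s _ => ?_
          rw [key]
          refine (Finset.abs_sum_le_sum_abs _ _).trans ?_
          refine Finset.sum_le_sum fun t _ => ?_
          rw [abs_mul, abs_of_nonneg (sub_nonneg.2 (hmle t s))]
      _ = ∑ t, (1 - ∑ s, m s) * |v t| := by
          rw [Finset.sum_comm]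
          refine Finset.sum_congr rfl fun t _ => ?_
          rw [← Finset.sum_mul, Finset.sum_sub_distrib, hQ1]
      _ = (1 - ∑ s, m s) * ∑ s, |v s| := by rw [← Finset.mul_sum]

end aux

section conv
variable {S : Type*} [Fintype S] [Nonempty S] [DecidableEq S]

lemma copAux_conv (P : Matrix S S ℝ) (hP0 : ∀ s s', 0 ≤ P s s')
    (hP1 : ∀ s, ∑ s', P s s' = 1)
    (hprim : ∃ N : ℕ, 1 ≤ N ∧ ∀ s s', 0 < (P ^ N) s s')
    (dπ : S → ℝ) (hdπstat : Pᵀ *ᵥ dπ = dπ)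
    (d0 : S → ℝ) (hsum : ∑ s, d0 s = ∑ s, dπ s) :
    ∀ s, Tendsto (fun k => ((Pᵀ ^ k) *ᵥ d0) s) atTop (𝓝 (dπ s)) := by
  obtain ⟨N, hN1, hNpos⟩ := hprim
  obtain ⟨hQ0, hQ1⟩ := copAux_pow_stoch P hP0 hP1 N
  obtain ⟨δ, hδ0, hδ1, hcontr⟩ := copAux_contraction (P ^ N) hNpos hQ1
  set v : ℕ → S → ℝ := fun k => (Pᵀ ^ k) *ᵥ (fun s => d0 s - dπ s) with hv
  have hvsucc : ∀ k, v (k + 1) = Pᵀ *ᵥ v k := by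
    intro k
    simp only [hv, Matrix.mulVec_mulVec, ← pow_succ']
  have hvsum : ∀ k, ∑ s, v k s = 0 := by
    intro k
    induction k with
    | zero => simp [hv, Finset.sum_sub_distrib, hsum]
    | succ n ih => rw [hvsucc, copAux_sum P hP1, ih]
  have hvN : ∀ k, v (k + N) = (P ^ N)ᵀ *ᵥ v k := by
    intro k
    simp only [hv, Matrix.mulVec_mulVec, Matrix.transpose_pow, ← pow_add]
    rw [add_comm]
  set f : ℕ → ℝ := fun k => ∑ s, |v k s| with hf
  have hf_anti : Antitone f := by
    apply antitone_nat_of_succ_le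
    intro k
    simp only [hf]
    rw [hvsucc]
    exact copAux_l1 P hP0 hP1 (v k)
  have hfN : ∀ k, f (k + N) ≤ (1 - δ) * f k := by
    intro k
    simp only [hf]
    rw [hvN]
    exact hcontr (v k) (hvsum k)
  have hmul : ∀ m, f (m * N) ≤ (1 - δ) ^ m * f 0 := by
    intro m
    induction m with
    | zero => simp
    | succ n ih =>
      calc f ((n + 1) * N) = f (n * N + N) := by ring_nf
        _ ≤ (1 - δ) * f (n * N) := hfN _
        _ ≤ (1 - δ) * ((1 - δ) ^ n * f 0) :=
            mul_le_mul_of_nonneg_left ih (by linarith)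
        _ = (1 - δ) ^ (n + 1) * f 0 := by ring
  have hfnonneg : ∀ k, 0 ≤ f k := fun k => Finset.sum_nonneg fun s _ => abs_nonneg _
  have hbound : ∀ k, f k ≤ (1 - δ) ^ (k / N) * f 0 := fun k =>
    (hf_anti (Nat.div_mul_le_self k N)).trans (hmul _)
  have hdiv : Tendsto (fun k : ℕ => k / N) atTop atTop := by
    apply tendsto_atTop_atTop.2
    intro b
    exact ⟨b * N, fun a ha => (Nat.le_div_iff_mul_le (by omega)).2 ha⟩
  have hg : Tendsto (fun k : ℕ => (1 - δ) ^ (k / N) * f 0) atTop (𝓝 0) := by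
    have h := ((tendsto_pow_atTop_nhds_zero_of_lt_one (r := 1 - δ) (by linarith)
      (by linarith)).comp hdiv).mul_const (f 0)
    simpa [Function.comp] using h
  have hf0 : Tendsto f atTop (𝓝 0) := squeeze_zero hfnonneg hbound hg
  intro s
  have h1 : Tendsto (fun k => v k s) atTop (𝓝 0) := by
    apply squeeze_zero_norm (fun k => ?_) hf0
    simpa [Real.norm_eq_abs, hf] using
      Finset.single_le_sum (f := fun t => |v k t|) (fun t _ => abs_nonneg _)
        (Finset.mem_univ s)
  have hπ : ∀ k, (Pᵀ ^ k) *ᵥ dπ = dπ := by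
    intro k
    induction k with
    | zero => simp
    | succ n ih => rw [pow_succ', ← Matrix.mulVec_mulVec, ih, hdπstat]
  have hrepr : ∀ k, ((Pᵀ ^ k) *ᵥ d0) s = v k s + dπ s := by
    intro k
    have hd0 : d0 = (fun s => d0 s - dπ s) + dπ := by
      funext t
      simp only [Pi.add_apply]
      ring
    have h2 : (Pᵀ ^ k) *ᵥ d0 = v k + (Pᵀ ^ k) *ᵥ dπ := by
      rw [hv]
      conv_lhs => rw [hd0]
      rw [Matrix.mulVec_add]
    rw [h2, hπ]
    rfl
  simpa only [hrepr, zero_add] using h1.add_const (dπ s)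

end conv

section aux2
variable {S : Type*} [Fintype S] [Nonempty S] [DecidableEq S]

lemma copAux_diag (d w : S → ℝ) (s : S) :
    (Matrix.diagonal d *ᵥ w) s = d s * w s := by
  simp [Matrix.mulVec, dotProduct, Matrix.diagonal_apply, ite_mul,
    Finset.sum_ite_eq]

end aux2

/-- The normalized COP operator: unique fixed point `dπ/dμ` and convergence
of its iterates (Corollary 3). -/
theorem normalized_cop_operator_convergence
    {S : Type*} [Fintype S] [Nonempty S] [DecidableEq S]
    -- `P` is a row-stochastic matrix (entry `P s s'` is `P(s' | s)`)
    (P : Matrix S S ℝ)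
    (hP0 : ∀ s s', 0 ≤ P s s') (hP1 : ∀ s, ∑ s', P s s' = 1)
    -- `P` is primitive (ergodicity assumption)
    (hprim : ∃ N : ℕ, 1 ≤ N ∧ ∀ s s', 0 < (P ^ N) s s')
    -- `dπ` is the unique strictly positive stationary probability vector of `P`
    (dπ : S → ℝ) (hdπpos : ∀ s, 0 < dπ s) (hdπsum : ∑ s, dπ s = 1)
    (hdπstat : Pᵀ *ᵥ dπ = dπ)
    (hdπuniq : ∀ d : S → ℝ, (∀ s, 0 ≤ d s) → ∑ s, d s = 1 → Pᵀ *ᵥ d = d → d = dπ)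
    -- `dμ` is a strictly positive probability vector
    (dμ : S → ℝ) (hdμpos : ∀ s, 0 < dμ s) (hdμsum : ∑ s, dμ s = 1)
    -- the COP operator `Y = D_{dμ}⁻¹ Pᵀ D_{dμ}` and its normalized version `Ybar`
    (Y : (S → ℝ) → (S → ℝ))
    (hY : ∀ x, Y x =
      (Matrix.diagonal (fun s => (dμ s)⁻¹) * Pᵀ * Matrix.diagonal dμ) *ᵥ x)
    (Ybar : (S → ℝ) → (S → ℝ))
    (hYbar : ∀ x, Ybar x = fun s => Y x s / ∑ t, dμ t * Y x t)
    -- iterates of `Ybar` from an arbitrary `c⁰ ≥ 0` with `∑ dμ c⁰ = 1`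
    (c0 : S → ℝ) (hc00 : ∀ s, 0 ≤ c0 s) (hc0sum : ∑ s, dμ s * c0 s = 1)
    (c : ℕ → S → ℝ) (hc0' : c 0 = c0) (hcsucc : ∀ k, c (k + 1) = Ybar (c k)) :
    -- `dπ/dμ` is a fixed point of `Ybar`
    Ybar (fun s => dπ s / dμ s) = (fun s => dπ s / dμ s) ∧
    -- it is the unique fixed point among `c ≥ 0` with `∑ dμ c = 1`
    (∀ x : S → ℝ, (∀ s, 0 ≤ x s) → ∑ s, dμ s * x s = 1 → Ybar x = x →
      x = fun s => dπ s / dμ s) ∧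
    -- the iterates converge entrywise to `dπ/dμ`
    ∀ s, Tendsto (fun k => c k s) atTop (𝓝 (dπ s / dμ s)) := by
  have hdμne : ∀ s, dμ s ≠ 0 := fun s => (hdμpos s).ne'
  -- explicit form of `Y`
  have hYcomp : ∀ x : S → ℝ,
      Y x = fun s => (dμ s)⁻¹ * (Pᵀ *ᵥ (fun t => dμ t * x t)) s := by
    intro x
    rw [hY, ← Matrix.mulVec_mulVec, ← Matrix.mulVec_mulVec]
    funext s
    rw [copAux_diag]
    congr 2
    funext t
    rw [copAux_diag]
  -- `Y` preserves `∑ dμ ·`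
  have hsumY : ∀ x : S → ℝ, ∑ t, dμ t * Y x t = ∑ t, dμ t * x t := by
    intro x
    have h : ∀ t, dμ t * Y x t = (Pᵀ *ᵥ (fun u => dμ u * x u)) t := by
      intro t
      rw [hYcomp]
      field_simp
      exact mul_div_cancel_left₀ _ (hdμne t)
    simp only [h]
    exact copAux_sum P hP1 _
  -- on the simplex, `Ybar = Y`
  have hYbar1 : ∀ x : S → ℝ, ∑ t, dμ t * x t = 1 → Ybar x = Y x := by
    intro x hx
    rw [hYbar]
    funext s
    rw [hsumY, hx, div_one]
  -- key: `dμ · Ybar x = Pᵀ (dμ · x)`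
  have hkey : ∀ x : S → ℝ, ∑ t, dμ t * x t = 1 →
      (fun s => dμ s * Ybar x s) = Pᵀ *ᵥ (fun t => dμ t * x t) := by
    intro x hx
    funext s
    rw [hYbar1 x hx, hYcomp]
    field_simp
    exact mul_div_cancel_left₀ _ (hdμne s)
  have hratio : (fun t => dμ t * (dπ t / dμ t)) = dπ := by
    funext t
    field_simp
    exact mul_div_cancel_left₀ _ (hdμne t)
  have hsumratio : ∑ t, dμ t * (dπ t / dμ t) = 1 := by
    rw [show ∑ t, dμ t * (dπ t / dμ t) = ∑ t, dπ t from
      Finset.sum_congr rfl fun t _ => by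
        field_simp
        exact mul_div_cancel_left₀ _ (hdμne t), hdπsum]
  -- fixed point
  have hfix : Ybar (fun s => dπ s / dμ s) = (fun s => dπ s / dμ s) := by
    rw [hYbar1 _ hsumratio, hYcomp]
    funext s
    have h2 : (fun t => dμ t * ((fun s => dπ s / dμ s) t)) = dπ := hratio
    rw [h2, hdπstat, inv_mul_eq_div]
  refine ⟨hfix, ?_, ?_⟩
  · -- uniqueness
    intro x hx0 hxsum hxfix
    have hstat : Pᵀ *ᵥ (fun t => dμ t * x t) = fun t => dμ t * x t := by
      have h := hkey x hxsum
      rw [hxfix] at h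
      exact h.symm
    have huniq := hdπuniq (fun t => dμ t * x t)
      (fun s => mul_nonneg (hdμpos s).le (hx0 s)) hxsum hstat
    funext s
    have h := congrFun huniq s
    rw [eq_div_iff (hdμne s), mul_comm]
    exact h
  · -- convergence
    have hd : ∀ k, (fun s => dμ s * c k s) = (Pᵀ ^ k) *ᵥ (fun s => dμ s * c0 s) := by
      intro k
      induction k with
      | zero => rw [hc0', pow_zero, Matrix.one_mulVec]
      | succ n ih =>
        have hsumn : ∑ t, dμ t * c n t = 1 := by
          calc ∑ t, dμ t * c n t
              = ∑ t, ((Pᵀ ^ n) *ᵥ (fun s => dμ s * c0 s)) t :=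
                Finset.sum_congr rfl fun t _ => congrFun ih t
            _ = ∑ s, dμ s * c0 s := by
                rw [← Matrix.transpose_pow]
                exact copAux_sum (P ^ n) (copAux_pow_stoch P hP0 hP1 n).2 _
            _ = 1 := hc0sum
        rw [hcsucc, hkey (c n) hsumn, ih, Matrix.mulVec_mulVec, ← pow_succ']
    intro s
    have hconv := copAux_conv P hP0 hP1 hprim dπ hdπstat (fun s => dμ s * c0 s)
      (by rw [hc0sum, hdπsum]) s
    have heq : ∀ k, c k s = ((Pᵀ ^ k) *ᵥ (fun s => dμ s * c0 s)) s / dμ s := by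
      intro k
      rw [← congrFun (hd k) s, mul_comm, mul_div_assoc, div_self (hdμne s), mul_one]
    simpa only [← heq] using hconv.div_const (dμ s)
end

section
/- Suppose P_π is primitive with unique strictly positive stationary distribution d_π, and suppose the COP operator Y, viewed as a matrix, is symmetric. Let Φ ⊆ ℝ^S be a linear subspace not containing the ratio vector d_π/d_μ (equivalently, containing no nonzero multiple of d_π/d_μ), and let Π denote the orthogonal projection onto Φ with respect to the standard Euclidean (L2) inner product. Then c = 0 is the only vector c ∈ ℝ^S satisfying Π Y c = c. -/
open Matrix Finset

/-- If the (symmetric) COP operator's fixed ratio `dπ/dμ` is not in the span of the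
features, then the projected COP equation only has the trivial solution (Lemma 4). -/
theorem fixed_point_of_approximate_cop
    {S : Type*} [Fintype S] [Nonempty S] [DecidableEq S]
    -- `P` is a row-stochastic matrix (entry `P s s'` is `P(s' | s)`)
    (P : Matrix S S ℝ)
    (hP0 : ∀ s s', 0 ≤ P s s') (hP1 : ∀ s, ∑ s', P s s' = 1)
    -- `P` is primitive (ergodicity assumption)
    (hprim : ∃ N : ℕ, 1 ≤ N ∧ ∀ s s', 0 < (P ^ N) s s')
    -- `dπ` is the unique strictly positive stationary probability vector of `P`
    (dπ : S → ℝ) (hdπpos : ∀ s, 0 < dπ s) (hdπsum : ∑ s, dπ s = 1)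
    (hdπstat : Pᵀ *ᵥ dπ = dπ)
    (hdπuniq : ∀ d : S → ℝ, (∀ s, 0 ≤ d s) → ∑ s, d s = 1 → Pᵀ *ᵥ d = d → d = dπ)
    -- `dμ` is a strictly positive probability vector
    (dμ : S → ℝ) (hdμpos : ∀ s, 0 < dμ s) (hdμsum : ∑ s, dμ s = 1)
    -- the COP operator matrix `Y = D_{dμ}⁻¹ Pᵀ D_{dμ}`, assumed symmetric
    (Y : Matrix S S ℝ)
    (hY : Y = Matrix.diagonal (fun s => (dμ s)⁻¹) * Pᵀ * Matrix.diagonal dμ)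
    (hYsymm : Y = Yᵀ)
    -- `Φ` is a subspace not containing the ratio vector `dπ/dμ`
    (Φ : Submodule ℝ (S → ℝ)) (hΦ : (fun s => dπ s / dμ s) ∉ Φ)
    -- `proj` is the orthogonal projection onto `Φ` w.r.t. the Euclidean inner product
    (proj : (S → ℝ) →ₗ[ℝ] (S → ℝ))
    (hprojmem : ∀ x, proj x ∈ Φ)
    (hprojorth : ∀ x, ∀ y ∈ Φ, ∑ s, (x s - proj x s) * y s = 0) :
    ∀ c : S → ℝ, proj (Y *ᵥ c) = c → c = 0 := by
  intro c hc
  classical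
  have hdμne : ∀ s, dμ s ≠ 0 := fun s => (hdμpos s).ne'
  -- entries of Y
  have hYent : ∀ s s', Y s s' = (dμ s)⁻¹ * P s' s * dμ s' := by
    intro s s'
    simp [hY, Matrix.mul_diagonal, Matrix.diagonal_mul, Matrix.transpose_apply]
  -- reversibility (detailed balance) of dμ²
  have hrev : ∀ s s', dμ s' * dμ s' * P s' s = dμ s * dμ s * P s s' := by
    intro s s'
    have h := congrFun (congrFun hYsymm s) s'
    rw [Matrix.transpose_apply, hYent s s', hYent s' s] at h
    field_simp [hdμne s, hdμne s'] at h
    linear_combination h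
  -- dμ² is stationary
  have hstatμ : ∀ s', ∑ s, dμ s * dμ s * P s s' = dμ s' * dμ s' := by
    intro s'
    calc ∑ s, dμ s * dμ s * P s s' = ∑ s, dμ s' * dμ s' * P s' s :=
          Finset.sum_congr rfl (fun s _ => (hrev s s').symm)
      _ = dμ s' * dμ s' * ∑ s, P s' s := by rw [Finset.mul_sum]
      _ = dμ s' * dμ s' := by rw [hP1 s', mul_one]
  set Z : ℝ := ∑ s, dμ s * dμ s with hZdef
  have hZpos : 0 < Z := Finset.sum_pos (fun s _ => mul_pos (hdμpos s) (hdμpos s)) univ_nonempty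
  -- identify dπ = dμ²/Z
  have hdπeq : ∀ s, dπ s = dμ s * dμ s / Z := by
    have h := hdπuniq (fun s => dμ s * dμ s / Z)
      (fun s => div_nonneg (mul_nonneg (hdμpos s).le (hdμpos s).le) hZpos.le)
      (by rw [← Finset.sum_div]; exact div_self hZpos.ne')
      (by
        funext s
        simp only [Matrix.mulVec, Matrix.transpose_apply, dotProduct]
        calc ∑ s', P s' s * (dμ s' * dμ s' / Z)
            = ∑ s', dμ s * dμ s * P s s' / Z := by
              refine Finset.sum_congr rfl fun s' _ => ?_
              rw [← hrev s s']; ring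
          _ = (∑ s', P s s') * (dμ s * dμ s) / Z := by
              rw [Finset.sum_mul, Finset.sum_div]
              exact Finset.sum_congr rfl fun s' _ => by ring
          _ = dμ s * dμ s / Z := by rw [hP1 s, one_mul])
    intro s
    exact (congrFun h s).symm
  -- the ratio f = c/dμ
  set f : S → ℝ := fun s => c s / dμ s with hfdef
  have hcf : ∀ s, c s = f s * dμ s := fun s => (div_mul_cancel₀ _ (hdμne s)).symm
  have hcΦ : c ∈ Φ := hc ▸ hprojmem (Y *ᵥ c)
  -- orthogonality applied to c itself
  have horth := hprojorth (Y *ᵥ c) c hcΦ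
  rw [hc] at horth
  have hYcc : ∑ s, (Y *ᵥ c) s * c s = ∑ s, c s * c s := by
    have h : ∑ s, ((Y *ᵥ c) s * c s - c s * c s) = 0 := by
      simpa [sub_mul] using horth
    rw [Finset.sum_sub_distrib] at h
    linarith
  -- term-level identity for the quadratic form
  have hterm : ∀ s s', Y s s' * c s' * c s = (dμ s * dμ s * P s s') * (f s * f s') := by
    intro s s'
    rw [hYent, hcf s, hcf s']
    have hr : (dμ s)⁻¹ * P s' s * dμ s' * (f s' * dμ s') * (f s * dμ s)
        = (dμ s' * dμ s' * P s' s) * (f s * f s') * ((dμ s)⁻¹ * dμ s) := by ring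
    rw [hr, inv_mul_cancel₀ (hdμne s), mul_one, hrev s s']
  have hS3 : ∑ s, ∑ s', (dμ s * dμ s * P s s') * (f s * f s') = ∑ s, c s * c s := by
    calc ∑ s, ∑ s', (dμ s * dμ s * P s s') * (f s * f s')
        = ∑ s, ∑ s', Y s s' * c s' * c s :=
          Finset.sum_congr rfl fun s _ => Finset.sum_congr rfl fun s' _ => (hterm s s').symm
      _ = ∑ s, (Y *ᵥ c) s * c s := by
          refine Finset.sum_congr rfl fun s _ => ?_
          simp [Matrix.mulVec, dotProduct, Finset.sum_mul]
      _ = ∑ s, c s * c s := hYcc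
  have hS1 : ∑ s, ∑ s', (dμ s * dμ s * P s s') * (f s * f s) = ∑ s, c s * c s := by
    refine Finset.sum_congr rfl fun s _ => ?_
    calc ∑ s', (dμ s * dμ s * P s s') * (f s * f s)
        = (∑ s', P s s') * (dμ s * dμ s * (f s * f s)) := by
          rw [Finset.sum_mul]
          exact Finset.sum_congr rfl fun s' _ => by ring
      _ = c s * c s := by rw [hP1 s, one_mul, hcf s]; ring
  have hS2 : ∑ s, ∑ s', (dμ s * dμ s * P s s') * (f s' * f s') = ∑ s, c s * c s := by
    rw [Finset.sum_comm]
    refine Finset.sum_congr rfl fun s' _ => ?_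
    calc ∑ s, (dμ s * dμ s * P s s') * (f s' * f s')
        = (∑ s, dμ s * dμ s * P s s') * (f s' * f s') := by rw [Finset.sum_mul]
      _ = c s' * c s' := by rw [hstatμ s', hcf s']; ring
  -- the Dirichlet form vanishes
  have hA : ∑ s, ∑ s', (dμ s * dμ s * P s s') * (f s - f s') ^ 2 = 0 := by
    have hsplit : ∀ s s', (dμ s * dμ s * P s s') * (f s - f s') ^ 2 =
        (dμ s * dμ s * P s s') * (f s * f s) + (dμ s * dμ s * P s s') * (f s' * f s')
          - 2 * ((dμ s * dμ s * P s s') * (f s * f s')) := fun s s' => by ring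
    calc ∑ s, ∑ s', (dμ s * dμ s * P s s') * (f s - f s') ^ 2
        = ∑ s, ∑ s', ((dμ s * dμ s * P s s') * (f s * f s)
            + (dμ s * dμ s * P s s') * (f s' * f s')
            - 2 * ((dμ s * dμ s * P s s') * (f s * f s'))) :=
          Finset.sum_congr rfl fun s _ => Finset.sum_congr rfl fun s' _ => hsplit s s'
      _ = (∑ s, ∑ s', (dμ s * dμ s * P s s') * (f s * f s))
            + (∑ s, ∑ s', (dμ s * dμ s * P s s') * (f s' * f s'))
            - 2 * (∑ s, ∑ s', (dμ s * dμ s * P s s') * (f s * f s')) := by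
          simp [Finset.sum_sub_distrib, Finset.sum_add_distrib, Finset.mul_sum]
      _ = 0 := by rw [hS1, hS2, hS3]; ring
  -- each term of the Dirichlet form is zero
  have hzero : ∀ s s', 0 < P s s' → f s = f s' := by
    intro s s' hPss
    have hnn : ∀ s ∈ (univ : Finset S), 0 ≤ ∑ s', (dμ s * dμ s * P s s') * (f s - f s') ^ 2 :=
      fun s _ => Finset.sum_nonneg fun s' _ =>
        mul_nonneg (mul_nonneg (mul_nonneg (hdμpos s).le (hdμpos s).le) (hP0 s s')) (sq_nonneg _)
    have h1 := (Finset.sum_eq_zero_iff_of_nonneg hnn).mp hA s (Finset.mem_univ s)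
    have hnn' : ∀ s' ∈ (univ : Finset S), 0 ≤ (dμ s * dμ s * P s s') * (f s - f s') ^ 2 :=
      fun s' _ =>
        mul_nonneg (mul_nonneg (mul_nonneg (hdμpos s).le (hdμpos s).le) (hP0 s s')) (sq_nonneg _)
    have h2 := (Finset.sum_eq_zero_iff_of_nonneg hnn').mp h1 s' (Finset.mem_univ s')
    have hQpos : 0 < dμ s * dμ s * P s s' :=
      mul_pos (mul_pos (hdμpos s) (hdμpos s)) hPss
    have : (f s - f s') ^ 2 = 0 := by
      by_contra hne
      exact hne (by
        have := mul_eq_zero.mp h2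
        rcases this with h | h
        · exact absurd h hQpos.ne'
        · exact h)
    have := pow_eq_zero_iff (n := 2) (by norm_num) |>.mp this
    linarith [sub_eq_zero.mp this]
  -- nonnegativity of powers
  have hpow0 : ∀ (k : ℕ) s s', 0 ≤ (P ^ k) s s' := by
    intro k
    induction k with
    | zero =>
      intro s s'
      rw [pow_zero]
      by_cases h : s = s' <;> simp [Matrix.one_apply, h]
    | succ k ih =>
      intro s s'
      rw [pow_succ, Matrix.mul_apply]
      exact Finset.sum_nonneg fun t _ => mul_nonneg (ih s t) (hP0 t s')
  -- propagate along paths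
  have hchain : ∀ (k : ℕ) s s', 0 < (P ^ k) s s' → f s = f s' := by
    intro k
    induction k with
    | zero =>
      intro s s' h
      rw [pow_zero] at h
      by_cases hss : s = s'
      · rw [hss]
      · simp [Matrix.one_apply, hss] at h
    | succ k ih =>
      intro s s' h
      rw [pow_succ, Matrix.mul_apply] at h
      obtain ⟨t, _, ht⟩ : ∃ t ∈ (univ : Finset S), 0 < (P ^ k) s t * P t s' := by
        by_contra hcon
        push_neg at hcon
        have : ∑ t, (P ^ k) s t * P t s' ≤ 0 :=
          Finset.sum_nonpos fun t htm => hcon t htm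
        linarith
      have h1 : 0 < (P ^ k) s t := by
        rcases mul_pos_iff.mp ht with ⟨h1, _⟩ | ⟨h1, _⟩
        · exact h1
        · exact absurd h1 (hpow0 k s t).not_gt
      have h2 : 0 < P t s' := by
        rcases mul_pos_iff.mp ht with ⟨_, h2⟩ | ⟨_, h2⟩
        · exact h2
        · exact absurd h2 (hP0 t s').not_gt
      exact (ih s t h1).trans (hzero t s' h2)
  obtain ⟨N, _, hNpos⟩ := hprim
  have hconst : ∀ s s', f s = f s' := fun s s' => hchain N s s' (hNpos s s')
  obtain s₀ := Classical.arbitrary S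
  have hct : ∀ s, c s = f s₀ * dμ s := fun s => by rw [hcf s, hconst s s₀]
  rcases eq_or_ne (f s₀) 0 with h0 | h0
  · funext s
    simp [hct s, h0]
  · exfalso
    apply hΦ
    have hratio : ∀ s, dπ s / dμ s = dμ s / Z := by
      intro s
      rw [hdπeq s, div_div, mul_comm Z (dμ s), ← div_div, mul_div_assoc,
        div_self (hdμne s), mul_one]
    have heq : (fun s => dπ s / dμ s) = (f s₀ * Z)⁻¹ • c := by
      funext s
      simp only [Pi.smul_apply, smul_eq_mul]
      have hrw : (f s₀ * Z)⁻¹ * c s = f s₀ * (f s₀)⁻¹ * (dμ s / Z) := by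
        rw [hct s, mul_inv]; ring
      rw [hratio s, hrw, mul_inv_cancel₀ h0, one_mul]
    rw [heq]
    exact Submodule.smul_mem Φ _ hcΦ
end

section
/- Let γ̂ ∈ [0,1). Then the ratio vector d̂_π/d_μ, with entries d̂_π(s)/d_μ(s), is the unique fixed point of the discounted COP operator Y_γ̂, i.e. Y_γ̂ (d̂_π/d_μ) = d̂_π/d_μ, and any c ∈ ℝ^S with Y_γ̂ c = c equals d̂_π/d_μ. -/
open Matrix Finset

/-- The ratio `d̂π/dμ` is the unique fixed point of the discounted COP
operator `Y_γ̂` (Lemma 6). -/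
theorem discounted_cop_fixed_point
    {S : Type*} [Fintype S] [Nonempty S] [DecidableEq S]
    -- `P` is a row-stochastic matrix (entry `P s s'` is `P(s' | s)`)
    (P : Matrix S S ℝ)
    (hP0 : ∀ s s', 0 ≤ P s s') (hP1 : ∀ s, ∑ s', P s s' = 1)
    -- `dμ` is a strictly positive probability vector
    (dμ : S → ℝ) (hdμpos : ∀ s, 0 < dμ s) (hdμsum : ∑ s, dμ s = 1)
    -- the discount factor
    (γ : ℝ) (hγ0 : 0 ≤ γ) (hγ1 : γ < 1)
    -- `B` is the inverse of `I - γ̂ Pᵀ`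
    (B : Matrix S S ℝ)
    (hB1 : (1 - γ • Pᵀ) * B = 1) (hB2 : B * (1 - γ • Pᵀ) = 1)
    -- `d̂π = (1-γ̂)(I - γ̂ Pᵀ)⁻¹ dμ`
    (dhat : S → ℝ) (hdhat : dhat = (1 - γ) • (B *ᵥ dμ))
    -- the discounted COP operator `Y_γ̂ c = γ̂ Y c + (1-γ̂) e`,
    -- where `Y = D_{dμ}⁻¹ Pᵀ D_{dμ}` and `e` is the all-ones vector
    (Yγ : (S → ℝ) → (S → ℝ))
    (hYγ : ∀ c, Yγ c =
      γ • ((Matrix.diagonal (fun s => (dμ s)⁻¹) * Pᵀ * Matrix.diagonal dμ) *ᵥ c)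
        + (1 - γ) • (fun _ => (1 : ℝ))) :
    -- `d̂π/dμ` is a fixed point of `Y_γ̂`, and it is the unique one
    Yγ (fun s => dhat s / dμ s) = (fun s => dhat s / dμ s) ∧
    ∀ c : S → ℝ, Yγ c = c → c = fun s => dhat s / dμ s := by
  have hd : ∀ s, dμ s ≠ 0 := fun s => (hdμpos s).ne'
  have hinv : ∀ s, dμ s * (dμ s)⁻¹ = 1 := fun s => mul_inv_cancel₀ (hd s)
  have hinj : ∀ v w : S → ℝ, (1 - γ • Pᵀ) *ᵥ v = (1 - γ • Pᵀ) *ᵥ w → v = w := by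
    intro v w h
    have := congrArg (fun u => B *ᵥ u) h
    simpa [Matrix.mulVec_mulVec, hB2, Matrix.one_mulVec] using this
  have hkey : (1 - γ • Pᵀ) *ᵥ dhat = (1 - γ) • dμ := by
    rw [hdhat, Matrix.mulVec_smul, Matrix.mulVec_mulVec, hB1, Matrix.one_mulVec]
  have hmv : ∀ (c : S → ℝ) (s : S),
      ((Matrix.diagonal (fun s => (dμ s)⁻¹) * Pᵀ * Matrix.diagonal dμ) *ᵥ c) s
      = (dμ s)⁻¹ * (Pᵀ *ᵥ (fun t => dμ t * c t)) s := by
    intro c s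
    rw [← Matrix.mulVec_mulVec, ← Matrix.mulVec_mulVec]
    have h1 : Matrix.diagonal dμ *ᵥ c = fun t => dμ t * c t := by
      funext t; simp [Matrix.mulVec_diagonal]
    rw [h1]
    simp [Matrix.mulVec_diagonal]
  have hchar : ∀ c : S → ℝ, Yγ c = c ↔ (fun s => dμ s * c s) = dhat := by
    intro c
    constructor
    · intro h
      apply hinj
      rw [hkey]
      funext s
      have hs := congrFun h s
      rw [hYγ] at hs
      simp only [Pi.add_apply, Pi.smul_apply, smul_eq_mul, hmv] at hs
      have hs2 : dμ s * c s = γ * (Pᵀ *ᵥ (fun t => dμ t * c t)) s + (1 - γ) * dμ s := by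
        linear_combination (-dμ s) * hs + γ * ((Pᵀ *ᵥ fun t => dμ t * c t) s) * hinv s
      simp only [Matrix.sub_mulVec, Matrix.smul_mulVec, Matrix.one_mulVec,
        Pi.sub_apply, Pi.smul_apply, smul_eq_mul]
      linarith [hs2]
    · intro h
      rw [hYγ]
      funext s
      simp only [Pi.add_apply, Pi.smul_apply, smul_eq_mul, hmv, h]
      have hk := congrFun hkey s
      simp only [Matrix.sub_mulVec, Matrix.smul_mulVec, Matrix.one_mulVec,
        Pi.sub_apply, Pi.smul_apply, smul_eq_mul] at hk
      have hc := congrFun h s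
      have hγP : γ * (Pᵀ *ᵥ dhat) s = dhat s - (1 - γ) * dμ s := by linarith
      have h2 : γ * ((dμ s)⁻¹ * (Pᵀ *ᵥ dhat) s) = (dμ s)⁻¹ * (dhat s - (1 - γ) * dμ s) := by
        linear_combination (dμ s)⁻¹ * hγP
      rw [h2, ← hc]
      linear_combination (c s - (1 - γ)) * hinv s
  have hfix : (fun s => dμ s * (dhat s / dμ s)) = dhat := by
    funext s
    rw [mul_comm]
    exact div_mul_cancel₀ _ (hd s)
  refine ⟨(hchar _).2 hfix, fun c hc => ?_⟩
  have hs := congrFun ((hchar c).1 hc)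
  funext s
  rw [eq_div_iff (hd s), mul_comm]
  exact hs s
end

section
/- Let γ̂ ∈ [0,1) and let c⁰ ∈ ℝ^S have nonnegative entries summing to 1. Then the iterates c^{k+1} = Y_γ̂ c^k converge (entrywise, as k → ∞) to the ratio vector d̂_π/d_μ with entries d̂_π(s)/d_μ(s). -/
/-!
Weight the iterates by `dμ`: the error `gₖ = D_{dμ} cᵏ - d̂π` satisfies `gₖ₊₁ = γ̂ Pπᵀ gₖ`, because
`d̂π = γ̂ Pπᵀ d̂π + (1 - γ̂) dμ` and `D_{dμ}` undoes the conjugation in `Y`. Since `Pπ` is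
row-stochastic, `Pπᵀ` does not increase the `ℓ¹` norm, so `‖gₖ‖₁ ≤ γ̂ᵏ ‖g₀‖₁ → 0`.
-/

open Matrix Finset Filter Topology

theorem sum_abs_vecMul_le_of_mem_rowStochastic {n : Type*} [Fintype n] [DecidableEq n]
    {P : Matrix n n ℝ} (hP : P ∈ rowStochastic ℝ n) (v : n → ℝ) :
    ∑ j, |(v ᵥ* P) j| ≤ ∑ i, |v i| :=
  calc ∑ j, |(v ᵥ* P) j| ≤ ∑ j, ∑ i, |v i| * P i j :=
        sum_le_sum fun j _ => (abs_sum_le_sum_abs _ _).trans_eq <| sum_congr rfl fun i _ => by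
          rw [abs_mul, abs_of_nonneg (nonneg_of_mem_rowStochastic hP)]
    _ = ∑ i, |v i| := by
        rw [sum_comm]
        simp_rw [← mul_sum, sum_row_of_mem_rowStochastic hP, mul_one]

theorem tendsto_zero_of_sum_abs_succ_le_mul {ι : Type*} [Fintype ι] {g : ℕ → ι → ℝ} {γ : ℝ}
    (hγ0 : 0 ≤ γ) (hγ1 : γ < 1) (h : ∀ k, ∑ i, |g (k + 1) i| ≤ γ * ∑ i, |g k i|) (i : ι) :
    Tendsto (fun k => g k i) atTop (𝓝 0) := by
  have hgeom : ∀ k, |g k i| ≤ γ ^ k * ∑ j, |g 0 j| := fun k =>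
    (single_le_sum (fun j _ => abs_nonneg (g k j)) (mem_univ i)).trans
      (le_geom (u := fun k => ∑ j, |g k j|) hγ0 k fun m _ => h m)
  rw [tendsto_zero_iff_abs_tendsto_zero]
  refine squeeze_zero (fun k => abs_nonneg _) hgeom ?_
  simpa using (tendsto_pow_atTop_nhds_zero_of_lt_one hγ0 hγ1).mul_const (∑ j, |g 0 j|)

theorem smul_mulVec_add_eq_of_mul_eq_one {n R : Type*} [Fintype n] [DecidableEq n] [CommRing R]
    {A B : Matrix n n R} {γ : R} (h : (1 - γ • A) * B = 1) (d : n → R) :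
    γ • (A *ᵥ ((1 - γ) • (B *ᵥ d))) + (1 - γ) • d = (1 - γ) • (B *ᵥ d) := by
  have hd : (1 - γ • A) *ᵥ (B *ᵥ d) = d := by rw [mulVec_mulVec, h, one_mulVec]
  rw [sub_mulVec, one_mulVec, smul_mulVec] at hd
  rw [mulVec_smul]
  linear_combination (norm := module) (γ - 1) • hd

theorem diagonal_mulVec_conj_mulVec {n K : Type*} [Fintype n] [DecidableEq n] [Field K]
    {d : n → K} (hd : ∀ i, d i ≠ 0) (A : Matrix n n K) (c : n → K) :
    diagonal d *ᵥ ((diagonal (fun i => (d i)⁻¹) * A * diagonal d) *ᵥ c) =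
      A *ᵥ (diagonal d *ᵥ c) := by
  rw [mulVec_mulVec, mulVec_mulVec, ← Matrix.mul_assoc, ← Matrix.mul_assoc,
    diagonal_mul_diagonal]
  simp [mul_inv_cancel₀ (hd _)]

theorem discounted_cop_convergence_general
    {S : Type*} [Fintype S] [DecidableEq S]
    -- `P` is a row-stochastic matrix (entry `P s s'` is `P(s' | s)`)
    (P : Matrix S S ℝ)
    (hP0 : ∀ s s', 0 ≤ P s s') (hP1 : ∀ s, ∑ s', P s s' = 1)
    -- `dμ` is a strictly positive probability vector
    (dμ : S → ℝ) (hdμpos : ∀ s, 0 < dμ s)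
    -- the discount factor
    (γ : ℝ) (hγ0 : 0 ≤ γ) (hγ1 : γ < 1)
    -- `B` is the inverse of `I - γ̂ Pᵀ`
    (B : Matrix S S ℝ)
    (hB1 : (1 - γ • Pᵀ) * B = 1)
    -- `d̂π = (1-γ̂)(I - γ̂ Pᵀ)⁻¹ dμ`
    (dhat : S → ℝ) (hdhat : dhat = (1 - γ) • (B *ᵥ dμ))
    -- the discounted COP operator `Y_γ̂ c = γ̂ Y c + (1-γ̂) e`,
    -- where `Y = D_{dμ}⁻¹ Pᵀ D_{dμ}` and `e` is the all-ones vector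
    (Yγ : (S → ℝ) → (S → ℝ))
    (hYγ : ∀ c, Yγ c =
      γ • ((Matrix.diagonal (fun s => (dμ s)⁻¹) * Pᵀ * Matrix.diagonal dμ) *ᵥ c)
        + (1 - γ) • (fun _ => (1 : ℝ)))
    -- `c⁰` has nonnegative entries summing to 1, and `c^{k+1} = Y_γ̂ c^k`
    (c : ℕ → S → ℝ) (hcsucc : ∀ k, c (k + 1) = Yγ (c k)) :
    ∀ s, Tendsto (fun k => c k s) atTop (𝓝 (dhat s / dμ s)) := by
  have hdμ : ∀ s, dμ s ≠ 0 := fun s => (hdμpos s).ne'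
  have hP : P ∈ rowStochastic ℝ S := mem_rowStochastic_iff_sum.2 ⟨hP0, hP1⟩
  have hfix : γ • (Pᵀ *ᵥ dhat) + (1 - γ) • dμ = dhat :=
    hdhat ▸ smul_mulVec_add_eq_of_mul_eq_one hB1 dμ
  set g : ℕ → S → ℝ := fun k => diagonal dμ *ᵥ c k - dhat with hg
  have hstep : ∀ k, g (k + 1) = γ • (Pᵀ *ᵥ g k) := by
    intro k
    have hone : diagonal dμ *ᵥ (fun _ => (1 : ℝ)) = dμ := funext fun s => by simp [mulVec_diagonal]
    simp only [hg, hcsucc, hYγ, mulVec_add, mulVec_smul, diagonal_mulVec_conj_mulVec hdμ, hone]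
    conv_lhs => rw [← hfix]
    rw [mulVec_sub]
    module
  have hg0 : ∀ s, Tendsto (fun k => g k s) atTop (𝓝 0) :=
    tendsto_zero_of_sum_abs_succ_le_mul hγ0 hγ1 fun k => by
      simp only [hstep k, Pi.smul_apply, smul_eq_mul, abs_mul, abs_of_nonneg hγ0, ← mul_sum,
        mulVec_transpose]
      exact mul_le_mul_of_nonneg_left (sum_abs_vecMul_le_of_mem_rowStochastic hP _) hγ0
  intro s
  have hc : ∀ k, c k s = (g k s + dhat s) / dμ s := fun k => by
    simp [hg, mulVec_diagonal, hdμ s]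
  simpa [hc] using ((hg0 s).add_const (dhat s)).div_const (dμ s)

/-- Convergence of the discounted COP operator iterates to `d̂π/dμ` (Theorem 7). -/
theorem discounted_cop_convergence
    {S : Type*} [Fintype S] [Nonempty S] [DecidableEq S]
    -- `P` is a row-stochastic matrix (entry `P s s'` is `P(s' | s)`)
    (P : Matrix S S ℝ)
    (hP0 : ∀ s s', 0 ≤ P s s') (hP1 : ∀ s, ∑ s', P s s' = 1)
    -- `dμ` is a strictly positive probability vector
    (dμ : S → ℝ) (hdμpos : ∀ s, 0 < dμ s) (hdμsum : ∑ s, dμ s = 1)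
    -- the discount factor
    (γ : ℝ) (hγ0 : 0 ≤ γ) (hγ1 : γ < 1)
    -- `B` is the inverse of `I - γ̂ Pᵀ`
    (B : Matrix S S ℝ)
    (hB1 : (1 - γ • Pᵀ) * B = 1) (hB2 : B * (1 - γ • Pᵀ) = 1)
    -- `d̂π = (1-γ̂)(I - γ̂ Pᵀ)⁻¹ dμ`
    (dhat : S → ℝ) (hdhat : dhat = (1 - γ) • (B *ᵥ dμ))
    -- the discounted COP operator `Y_γ̂ c = γ̂ Y c + (1-γ̂) e`,
    -- where `Y = D_{dμ}⁻¹ Pᵀ D_{dμ}` and `e` is the all-ones vector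
    (Yγ : (S → ℝ) → (S → ℝ))
    (hYγ : ∀ c, Yγ c =
      γ • ((Matrix.diagonal (fun s => (dμ s)⁻¹) * Pᵀ * Matrix.diagonal dμ) *ᵥ c)
        + (1 - γ) • (fun _ => (1 : ℝ)))
    -- `c⁰` has nonnegative entries summing to 1, and `c^{k+1} = Y_γ̂ c^k`
    (c0 : S → ℝ) (hc00 : ∀ s, 0 ≤ c0 s) (hc0sum : ∑ s, c0 s = 1)
    (c : ℕ → S → ℝ) (hc0' : c 0 = c0) (hcsucc : ∀ k, c (k + 1) = Yγ (c k)) :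
    ∀ s, Tendsto (fun k => c k s) atTop (𝓝 (dhat s / dμ s)) :=
  discounted_cop_convergence_general P hP0 hP1 dμ hdμpos γ hγ0 hγ1 B hB1 dhat hdhat Yγ hYγ c hcsucc
end

section
/- For every n ≥ 1 and every x ∈ ℝ^S, ‖Y^n x‖_{d_μ}² ≤ K_{π,μ,n} ‖x‖_{d_μ}², where K_{π,μ,n} = max_{s'∈S} Σ_{s∈S} (d_μ(s)/d_μ(s')) P_π^n(s'|s). In particular, the induced operator norm of Y^n with respect to ‖·‖_{d_μ} is at most √K_{π,μ,n}. -/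
open Matrix Finset

/-- The induced operator norm of `Yⁿ` w.r.t. the `dμ`-weighted norm is bounded by
`√K_{π,μ,n}` (Lemma 8, first part). -/
theorem cop_operator_norm_bound
    {S : Type*} [Fintype S] [Nonempty S] [DecidableEq S]
    -- `P` is a row-stochastic matrix (entry `P s s'` is `P(s' | s)`)
    (P : Matrix S S ℝ)
    (hP0 : ∀ s s', 0 ≤ P s s') (hP1 : ∀ s, ∑ s', P s s' = 1)
    -- `dμ` is a strictly positive probability vector
    (dμ : S → ℝ) (hdμpos : ∀ s, 0 < dμ s) (hdμsum : ∑ s, dμ s = 1)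
    -- the COP operator matrix `Y = D_{dμ}⁻¹ Pᵀ D_{dμ}`
    (Y : Matrix S S ℝ)
    (hY : Y = Matrix.diagonal (fun s => (dμ s)⁻¹) * Pᵀ * Matrix.diagonal dμ)
    -- the concentration coefficient `K_{π,μ,n}`
    (n : ℕ) (hn : 1 ≤ n)
    (K : ℝ)
    (hK : K = Finset.univ.sup' Finset.univ_nonempty
      (fun s' => ∑ s, dμ s / dμ s' * (P ^ n) s s')) :
    -- squared-norm bound
    (∀ x : S → ℝ,
      ∑ s, dμ s * (((Y ^ n) *ᵥ x) s) ^ 2 ≤ K * ∑ s, dμ s * (x s) ^ 2) ∧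
    -- hence the induced operator norm of `Yⁿ` is at most `√K`
    (∀ x : S → ℝ,
      Real.sqrt (∑ s, dμ s * (((Y ^ n) *ᵥ x) s) ^ 2)
        ≤ Real.sqrt K * Real.sqrt (∑ s, dμ s * (x s) ^ 2)) := by
  have hdne : ∀ s, dμ s ≠ 0 := fun s => (hdμpos s).ne'
  have hDD : (Matrix.diagonal dμ) * Matrix.diagonal (fun s => (dμ s)⁻¹) = 1 := by
    rw [Matrix.diagonal_mul_diagonal]
    have : (fun s => dμ s * (dμ s)⁻¹) = fun _ : S => (1 : ℝ) :=
      funext fun s => mul_inv_cancel₀ (hdne s)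
    rw [this, Matrix.diagonal_one]
  have cancel : ∀ Z : Matrix S S ℝ,
      Matrix.diagonal dμ * (Matrix.diagonal (fun s => (dμ s)⁻¹) * Z) = Z := fun Z => by
    rw [← Matrix.mul_assoc, hDD, one_mul]
  -- Y^m = D⁻¹ (Pᵀ)^m D
  have hYm : ∀ m : ℕ, Y ^ m =
      Matrix.diagonal (fun s => (dμ s)⁻¹) * (Pᵀ) ^ m * Matrix.diagonal dμ := by
    intro m
    induction m with
    | zero =>
        rw [pow_zero, pow_zero, mul_one, Matrix.diagonal_mul_diagonal]
        have : (fun s => (dμ s)⁻¹ * dμ s) = fun _ : S => (1 : ℝ) :=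
          funext fun s => inv_mul_cancel₀ (hdne s)
        rw [this, Matrix.diagonal_one]
    | succ m ih =>
        rw [pow_succ, pow_succ, ih, hY]
        simp only [Matrix.mul_assoc, cancel]
  have hentry : ∀ s' s : S, (Y ^ n) s' s = (dμ s')⁻¹ * ((P ^ n) s s' * dμ s) := by
    intro s' s
    rw [hYm n, ← Matrix.transpose_pow, Matrix.mul_diagonal, Matrix.diagonal_mul,
      Matrix.transpose_apply, mul_assoc]
  have hpow0 : ∀ (m : ℕ) (s s' : S), 0 ≤ (P ^ m) s s' := by
    intro m
    induction m with
    | zero => intro s s'; by_cases h : s = s' <;> simp [Matrix.one_apply, h]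
    | succ m ih =>
        intro s s'
        rw [pow_succ, Matrix.mul_apply]
        exact Finset.sum_nonneg fun t _ => mul_nonneg (ih s t) (hP0 t s')
  have hpow1 : ∀ (m : ℕ) (s : S), ∑ s', (P ^ m) s s' = 1 := by
    intro m
    induction m with
    | zero => intro s; simp [Matrix.one_apply]
    | succ m ih =>
        intro s
        simp only [pow_succ, Matrix.mul_apply]
        rw [Finset.sum_comm]
        calc ∑ t, ∑ s', (P ^ m) s t * P t s'
            = ∑ t, (P ^ m) s t * ∑ s', P t s' := by
              simp [Finset.mul_sum]
          _ = 1 := by simp [hP1, ih s]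
  set Q := P ^ n with hQ
  have hQ0 : ∀ s s', 0 ≤ Q s s' := hpow0 n
  have hQ1 : ∀ s, ∑ s', Q s s' = 1 := hpow1 n
  have hKge : ∀ s', (∑ s, dμ s / dμ s' * Q s s') ≤ K := by
    intro s'
    rw [hK]
    exact Finset.le_sup' (fun t => ∑ s, dμ s / dμ t * Q s t) (Finset.mem_univ s')
  have hK0 : 0 ≤ K := by
    obtain ⟨s'⟩ := ‹Nonempty S›
    refine le_trans ?_ (hKge s')
    exact Finset.sum_nonneg fun s _ =>
      mul_nonneg (div_nonneg (hdμpos s).le (hdμpos s').le) (hQ0 s s')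
  have main : ∀ x : S → ℝ,
      ∑ s, dμ s * (((Y ^ n) *ᵥ x) s) ^ 2 ≤ K * ∑ s, dμ s * (x s) ^ 2 := by
    intro x
    have hval : ∀ s' : S, ((Y ^ n) *ᵥ x) s' = (dμ s')⁻¹ * ∑ s, dμ s * Q s s' * x s := by
      intro s'
      simp only [Matrix.mulVec, dotProduct, hentry, Finset.mul_sum]
      exact Finset.sum_congr rfl fun s _ => by ring
    have step : ∀ s' : S, dμ s' * (((Y ^ n) *ᵥ x) s') ^ 2
        ≤ K * ∑ s, dμ s * Q s s' * (x s) ^ 2 := by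
      intro s'
      rw [hval s']
      have cs : (∑ s, dμ s * Q s s' * x s) ^ 2
          ≤ (∑ s, dμ s * Q s s') * ∑ s, dμ s * Q s s' * (x s) ^ 2 := by
        refine Finset.sum_sq_le_sum_mul_sum_of_sq_eq_mul Finset.univ
          (f := fun s => dμ s * Q s s') (g := fun s => dμ s * Q s s' * (x s) ^ 2)
          (fun s _ => mul_nonneg (hdμpos s).le (hQ0 s s'))
          (fun s _ => mul_nonneg (mul_nonneg (hdμpos s).le (hQ0 s s')) (sq_nonneg _))
          (fun s _ => by ring)
      have hw : 0 ≤ ∑ s, dμ s * Q s s' * (x s) ^ 2 :=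
        Finset.sum_nonneg fun s _ => mul_nonneg
          (mul_nonneg (hdμpos s).le (hQ0 s s')) (sq_nonneg _)
      calc dμ s' * ((dμ s')⁻¹ * ∑ s, dμ s * Q s s' * x s) ^ 2
          = (dμ s')⁻¹ * (∑ s, dμ s * Q s s' * x s) ^ 2 := by
            rw [mul_pow, ← mul_assoc, sq ((dμ s')⁻¹), ← mul_assoc,
              mul_inv_cancel₀ (hdne s'), one_mul]
        _ ≤ (dμ s')⁻¹ * ((∑ s, dμ s * Q s s') * ∑ s, dμ s * Q s s' * (x s) ^ 2) :=
            mul_le_mul_of_nonneg_left cs (inv_nonneg.mpr (hdμpos s').le)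
        _ = ((dμ s')⁻¹ * ∑ s, dμ s * Q s s') * ∑ s, dμ s * Q s s' * (x s) ^ 2 := by ring
        _ ≤ K * ∑ s, dμ s * Q s s' * (x s) ^ 2 := by
            refine mul_le_mul_of_nonneg_right ?_ hw
            calc (dμ s')⁻¹ * ∑ s, dμ s * Q s s'
                = ∑ s, dμ s / dμ s' * Q s s' := by
                  rw [Finset.mul_sum]
                  exact Finset.sum_congr rfl fun s _ => by field_simp
              _ ≤ K := hKge s'
    calc ∑ s', dμ s' * (((Y ^ n) *ᵥ x) s') ^ 2
        ≤ ∑ s', K * ∑ s, dμ s * Q s s' * (x s) ^ 2 :=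
          Finset.sum_le_sum fun s' _ => step s'
      _ = K * ∑ s, dμ s * (x s) ^ 2 := by
          rw [← Finset.mul_sum, Finset.sum_comm]
          congr 1
          refine Finset.sum_congr rfl fun s _ => ?_
          calc ∑ s', dμ s * Q s s' * (x s) ^ 2
              = dμ s * (x s) ^ 2 * ∑ s', Q s s' := by
                rw [Finset.mul_sum]
                exact Finset.sum_congr rfl fun s' _ => by ring
            _ = dμ s * (x s) ^ 2 := by rw [hQ1 s, mul_one]
  refine ⟨main, fun x => ?_⟩
  calc Real.sqrt (∑ s, dμ s * (((Y ^ n) *ᵥ x) s) ^ 2)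
      ≤ Real.sqrt (K * ∑ s, dμ s * (x s) ^ 2) := Real.sqrt_le_sqrt (main x)
    _ = Real.sqrt K * Real.sqrt (∑ s, dμ s * (x s) ^ 2) := Real.sqrt_mul hK0 _
end

section
/- Suppose P_π has a strictly positive stationary distribution d_π. Then for every n ≥ 1, K_{π,μ,n} ≤ K_{π,μ} where K_{π,μ} = (max_{s∈S} d_μ(s)/d_π(s)) · (max_{s∈S} d_π(s)/d_μ(s)). In particular the sequence (K_{π,μ,n})_{n≥1} is bounded by the constant K_{π,μ}. -/
open Matrix Finset

/-- The concentration coefficients `K_{π,μ,n}` are uniformly bounded by the constant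
`K_{π,μ} = ‖dμ/dπ‖_∞ ‖dπ/dμ‖_∞` (Lemma 8, second part). -/
theorem concentration_coefficient_bounded
    {S : Type*} [Fintype S] [Nonempty S] [DecidableEq S]
    -- `P` is a row-stochastic matrix (entry `P s s'` is `P(s' | s)`)
    (P : Matrix S S ℝ)
    (hP0 : ∀ s s', 0 ≤ P s s') (hP1 : ∀ s, ∑ s', P s s' = 1)
    -- `dμ` is a strictly positive probability vector
    (dμ : S → ℝ) (hdμpos : ∀ s, 0 < dμ s) (hdμsum : ∑ s, dμ s = 1)
    -- `dπ` is a strictly positive stationary probability vector of `P`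
    (dπ : S → ℝ) (hdπpos : ∀ s, 0 < dπ s) (hdπsum : ∑ s, dπ s = 1)
    (hdπstat : Pᵀ *ᵥ dπ = dπ) :
    ∀ n : ℕ, 1 ≤ n →
      Finset.univ.sup' Finset.univ_nonempty
          (fun s' => ∑ s, dμ s / dμ s' * (P ^ n) s s')
        ≤ (Finset.univ.sup' Finset.univ_nonempty (fun s => dμ s / dπ s))
          * (Finset.univ.sup' Finset.univ_nonempty (fun s => dπ s / dμ s)) := by
  intro n hn
  set A := Finset.univ.sup' Finset.univ_nonempty (fun s => dμ s / dπ s) with hA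
  set B := Finset.univ.sup' Finset.univ_nonempty (fun s => dπ s / dμ s) with hB
  -- powers of P are entrywise nonneg
  have hPn0 : ∀ m : ℕ, ∀ s s', 0 ≤ (P ^ m) s s' := by
    intro m s s'
    induction m generalizing s s' with
    | zero => simp [Matrix.one_apply]; positivity
    | succ m ih =>
      rw [pow_succ, Matrix.mul_apply]
      exact Finset.sum_nonneg fun t _ => mul_nonneg (ih s t) (hP0 t s')
  -- stationarity of P^n
  have hstat : ∀ m : ℕ, ∀ s', ∑ s, dπ s * (P ^ m) s s' = dπ s' := by
    intro m
    induction m with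
    | zero => intro s'; simp [Matrix.one_apply, Finset.sum_ite_eq]
    | succ m ih =>
      intro s'
      have : ∑ s, dπ s * (P ^ (m+1)) s s'
          = ∑ t, (∑ s, dπ s * (P ^ m) s t) * P t s' := by
        simp only [pow_succ, Matrix.mul_apply, Finset.mul_sum, Finset.sum_mul]
        rw [Finset.sum_comm]
        simp [mul_assoc]
      rw [this]
      simp only [ih]
      have := congrFun hdπstat s'
      simpa [Matrix.mulVec, dotProduct, Matrix.transpose_apply, mul_comm] using this
  have hApos : 0 < A := by
    obtain ⟨s₀⟩ := ‹Nonempty S›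
    refine lt_of_lt_of_le (div_pos (hdμpos s₀) (hdπpos s₀)) ?_
    rw [hA]
    exact Finset.le_sup' (fun s => dμ s / dπ s) (Finset.mem_univ s₀)
  apply Finset.sup'_le
  intro s' _
  have hAle : ∀ s, dμ s ≤ A * dπ s := by
    intro s
    have h : dμ s / dπ s ≤ A := by
      rw [hA]; exact Finset.le_sup' (fun s => dμ s / dπ s) (Finset.mem_univ s)
    calc dμ s = dμ s / dπ s * dπ s := by
          rw [div_mul_cancel₀ _ (hdπpos s).ne']
    _ ≤ A * dπ s := mul_le_mul_of_nonneg_right h (hdπpos s).le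
  have h1 : ∑ s, dμ s / dμ s' * (P ^ n) s s'
      ≤ ∑ s, A * dπ s / dμ s' * (P ^ n) s s' := by
    apply Finset.sum_le_sum
    intro s _
    apply mul_le_mul_of_nonneg_right _ (hPn0 n s s')
    exact div_le_div_of_nonneg_right (hAle s) (hdμpos s').le
  have h2 : ∑ s, A * dπ s / dμ s' * (P ^ n) s s' = A * (dπ s' / dμ s') := by
    have : ∑ s, A * dπ s / dμ s' * (P ^ n) s s'
        = (A / dμ s') * ∑ s, dπ s * (P ^ n) s s' := by
      rw [Finset.mul_sum]; apply Finset.sum_congr rfl; intro s _; ring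
    rw [this, hstat n s']; ring
  have h3 : dπ s' / dμ s' ≤ B := by
    rw [hB]; exact Finset.le_sup' (fun s => dπ s / dμ s) (Finset.mem_univ s')
  calc ∑ s, dμ s / dμ s' * (P ^ n) s s' ≤ A * (dπ s' / dμ s') := by rw [← h2]; exact h1
  _ ≤ A * B := mul_le_mul_of_nonneg_left h3 hApos.le
end

section
/- Let γ̂ ∈ [0,1) and n ≥ 1. Then for every c ∈ ℝ^S, ‖Y_γ̂^n c − d̂_π/d_μ‖_{d_μ} ≤ γ̂^n √(K_{π,μ,n}) · ‖c − d̂_π/d_μ‖_{d_μ}. Consequently, if γ̂ < (K_{π,μ,n})^{-1/(2n)}, then Y_γ̂^n is a contraction mapping with respect to ‖·‖_{d_μ}: for all c, c' ∈ ℝ^S, ‖Y_γ̂^n c − Y_γ̂^n c'‖_{d_μ} ≤ γ̂^n √(K_{π,μ,n}) ‖c − c'‖_{d_μ} with γ̂^n √(K_{π,μ,n}) < 1. -/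
open Matrix Finset

lemma pow_stoch' {S : Type*} [Fintype S] [DecidableEq S]
    (P : Matrix S S ℝ) (hP0 : ∀ s s', 0 ≤ P s s') (hP1 : ∀ s, ∑ s', P s s' = 1) (n : ℕ) :
    (∀ s s', 0 ≤ (P ^ n) s s') ∧ (∀ s, ∑ s', (P ^ n) s s' = 1) := by
  induction n with
  | zero =>
    refine ⟨fun s s' => ?_, fun s => ?_⟩
    · rw [pow_zero]
      by_cases h : s = s' <;> simp [Matrix.one_apply, h]
    · rw [pow_zero]; simp [Matrix.one_apply]
  | succ n ih =>
    obtain ⟨h0, h1⟩ := ih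
    refine ⟨fun s s' => ?_, fun s => ?_⟩
    · rw [pow_succ, Matrix.mul_apply]
      exact Finset.sum_nonneg fun t _ => mul_nonneg (h0 s t) (hP0 t s')
    · simp only [pow_succ, Matrix.mul_apply]
      rw [Finset.sum_comm]
      calc ∑ t, ∑ s', (P ^ n) s t * P t s'
          = ∑ t, (P ^ n) s t * ∑ s', P t s' := by simp [Finset.mul_sum]
        _ = 1 := by simp [hP1, h1 s]

lemma diag_conj_pow' {S : Type*} [Fintype S] [DecidableEq S] (P : Matrix S S ℝ)
    (dμ : S → ℝ) (hd : ∀ s, dμ s ≠ 0) (n : ℕ) :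
    (Matrix.diagonal (fun s => (dμ s)⁻¹) * Pᵀ * Matrix.diagonal dμ) ^ n
      = Matrix.diagonal (fun s => (dμ s)⁻¹) * Pᵀ ^ n * Matrix.diagonal dμ := by
  induction n with
  | zero =>
    rw [pow_zero, pow_zero, Matrix.mul_one, Matrix.diagonal_mul_diagonal]
    rw [show (fun s => (dμ s)⁻¹ * dμ s) = fun _ => (1:ℝ) from
      funext fun s => inv_mul_cancel₀ (hd s)]
    exact (Matrix.diagonal_one).symm
  | succ n ih =>
    rw [pow_succ, ih, pow_succ]
    have hDD : Matrix.diagonal dμ * Matrix.diagonal (fun s => (dμ s)⁻¹) = (1 : Matrix S S ℝ) := by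
      rw [Matrix.diagonal_mul_diagonal]
      rw [show (fun s => dμ s * (dμ s)⁻¹) = fun _ => (1:ℝ) from
        funext fun s => mul_inv_cancel₀ (hd s)]
      exact Matrix.diagonal_one
    calc Matrix.diagonal (fun s => (dμ s)⁻¹) * Pᵀ ^ n * Matrix.diagonal dμ *
          (Matrix.diagonal (fun s => (dμ s)⁻¹) * Pᵀ * Matrix.diagonal dμ)
        = Matrix.diagonal (fun s => (dμ s)⁻¹) * Pᵀ ^ n *
            (Matrix.diagonal dμ * Matrix.diagonal (fun s => (dμ s)⁻¹)) *
            (Pᵀ * Matrix.diagonal dμ) := by noncomm_ring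
      _ = Matrix.diagonal (fun s => (dμ s)⁻¹) * (Pᵀ ^ n * Pᵀ) * Matrix.diagonal dμ := by
          rw [hDD, Matrix.mul_one]; noncomm_ring

/-- The `n`-step discounted COP operator contracts toward `d̂π/dμ` at rate
`γ̂ⁿ √K_{π,μ,n}`, and is a contraction mapping when `γ̂ < K_{π,μ,n}^{-1/(2n)}`
(Theorem 9). -/
theorem n_step_discounted_cop_contraction
    {S : Type*} [Fintype S] [Nonempty S] [DecidableEq S]
    -- `P` is a row-stochastic matrix (entry `P s s'` is `P(s' | s)`)
    (P : Matrix S S ℝ)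
    (hP0 : ∀ s s', 0 ≤ P s s') (hP1 : ∀ s, ∑ s', P s s' = 1)
    -- `dμ` is a strictly positive probability vector
    (dμ : S → ℝ) (hdμpos : ∀ s, 0 < dμ s) (hdμsum : ∑ s, dμ s = 1)
    -- the `dμ`-weighted norm
    (nrm : (S → ℝ) → ℝ) (hnrm : ∀ x, nrm x = Real.sqrt (∑ s, dμ s * (x s) ^ 2))
    -- the discount factor
    (γ : ℝ) (hγ0 : 0 ≤ γ) (hγ1 : γ < 1)
    -- `B` is the inverse of `I - γ̂ Pᵀ`, and `d̂π = (1-γ̂) B dμ`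
    (B : Matrix S S ℝ)
    (hB1 : (1 - γ • Pᵀ) * B = 1) (hB2 : B * (1 - γ • Pᵀ) = 1)
    (dhat : S → ℝ) (hdhat : dhat = (1 - γ) • (B *ᵥ dμ))
    -- the discounted COP operator `Y_γ̂ c = γ̂ Y c + (1-γ̂) e`,
    -- where `Y = D_{dμ}⁻¹ Pᵀ D_{dμ}` and `e` is the all-ones vector
    (Yγ : (S → ℝ) → (S → ℝ))
    (hYγ : ∀ c, Yγ c =
      γ • ((Matrix.diagonal (fun s => (dμ s)⁻¹) * Pᵀ * Matrix.diagonal dμ) *ᵥ c)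
        + (1 - γ) • (fun _ => (1 : ℝ)))
    -- the concentration coefficient `K_{π,μ,n}`
    (n : ℕ) (hn : 1 ≤ n)
    (K : ℝ)
    (hK : K = Finset.univ.sup' Finset.univ_nonempty
      (fun s' => ∑ s, dμ s / dμ s' * (P ^ n) s s')) :
    -- contraction toward the fixed point `d̂π/dμ`
    (∀ c : S → ℝ,
      nrm (Yγ^[n] c - fun s => dhat s / dμ s)
        ≤ γ ^ n * Real.sqrt K * nrm (c - fun s => dhat s / dμ s)) ∧
    -- `Y_γ̂ⁿ` is a contraction mapping whenever `γ̂ < K^{-1/(2n)}`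
    (γ < K ^ (-(1 : ℝ) / (2 * (n : ℝ))) →
      (∀ c c' : S → ℝ,
        nrm (Yγ^[n] c - Yγ^[n] c') ≤ γ ^ n * Real.sqrt K * nrm (c - c')) ∧
      γ ^ n * Real.sqrt K < 1) := by
  have hdne : ∀ s, dμ s ≠ 0 := fun s => (hdμpos s).ne'
  set M : Matrix S S ℝ :=
    Matrix.diagonal (fun s => (dμ s)⁻¹) * Pᵀ * Matrix.diagonal dμ with hM
  obtain ⟨hQ0, hQ1⟩ := pow_stoch' P hP0 hP1 n
  have hK0 : 0 ≤ K := by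
    rw [hK]
    obtain ⟨s₀⟩ := ‹Nonempty S›
    refine le_trans ?_ (Finset.le_sup'
      (fun s' => ∑ s, dμ s / dμ s' * (P ^ n) s s') (Finset.mem_univ s₀))
    exact Finset.sum_nonneg fun s _ => mul_nonneg
      (div_nonneg (hdμpos s).le (hdμpos s₀).le) (hQ0 s s₀)
  -- one-step contraction identity
  have hstep : ∀ x y : S → ℝ, Yγ x - Yγ y = γ • (M *ᵥ (x - y)) := by
    intro x y
    funext s
    simp only [hYγ, Pi.sub_apply, Pi.add_apply, Pi.smul_apply, smul_eq_mul,
      Matrix.mulVec_sub]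
    ring
  -- iterated version
  have hiter : ∀ (m : ℕ) (x y : S → ℝ),
      Yγ^[m] x - Yγ^[m] y = γ ^ m • ((M ^ m) *ᵥ (x - y)) := by
    intro m
    induction m with
    | zero => intro x y; simp
    | succ m ih =>
      intro x y
      rw [Function.iterate_succ_apply', Function.iterate_succ_apply',
        hstep _ _, ih x y, Matrix.mulVec_smul, Matrix.mulVec_mulVec,
        smul_smul, ← pow_succ', ← pow_succ']
  -- the fixed point
  have hfp : (1 : Matrix S S ℝ) *ᵥ dhat - γ • (Pᵀ *ᵥ dhat) = (1 - γ) • dμ := by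
    rw [← Matrix.smul_mulVec, ← Matrix.sub_mulVec, hdhat,
      Matrix.mulVec_smul, Matrix.mulVec_mulVec, hB1, Matrix.one_mulVec]
  have hfix : Yγ (fun s => dhat s / dμ s) = fun s => dhat s / dμ s := by
    funext s
    have h1 : dhat s - γ * (Pᵀ *ᵥ dhat) s = (1 - γ) * dμ s := by
      have := congrFun hfp s
      simpa [Matrix.one_mulVec] using this
    have h2 : (M *ᵥ fun s => dhat s / dμ s) s = (dμ s)⁻¹ * (Pᵀ *ᵥ dhat) s := by
      simp only [hM, Matrix.mulVec, dotProduct, Matrix.mul_diagonal,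
        Matrix.diagonal_mul, Finset.mul_sum]
      refine Finset.sum_congr rfl fun j _ => ?_
      field_simp
      rw [div_eq_div_iff (mul_ne_zero (hdne s) (hdne j)) (hdne s)]
      ring
    simp only [hYγ, Pi.add_apply, Pi.smul_apply, smul_eq_mul, h2]
    have hds := hdne s
    field_simp
    nlinarith [h1]
  have hff : Yγ^[n] (fun s => dhat s / dμ s) = fun s => dhat s / dμ s :=
    Function.iterate_fixed hfix n
  -- key norm estimate
  have hkey : ∀ x : S → ℝ,
      nrm (γ ^ n • (M ^ n *ᵥ x)) ≤ γ ^ n * Real.sqrt K * nrm x := by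
    intro x
    have hMn : M ^ n = Matrix.diagonal (fun s => (dμ s)⁻¹) * Pᵀ ^ n * Matrix.diagonal dμ :=
      diag_conj_pow' P dμ hdne n
    have hentry : ∀ s', (M ^ n *ᵥ x) s' = ∑ s, dμ s / dμ s' * (P ^ n) s s' * x s := by
      intro s'
      rw [hMn, ← Matrix.transpose_pow]
      simp only [Matrix.mulVec, dotProduct, Matrix.mul_diagonal, Matrix.diagonal_mul,
        Matrix.transpose_apply]
      refine Finset.sum_congr rfl fun j _ => ?_
      field_simp
    have hsum : ∑ s', dμ s' * ((M ^ n *ᵥ x) s') ^ 2 ≤ K * ∑ s, dμ s * (x s) ^ 2 := by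
      have hpt : ∀ s', dμ s' * ((M ^ n *ᵥ x) s') ^ 2
          ≤ dμ s' * (K * ∑ s, dμ s / dμ s' * (P ^ n) s s' * (x s) ^ 2) := by
        intro s'
        refine mul_le_mul_of_nonneg_left ?_ (hdμpos s').le
        have ha0 : ∀ s, 0 ≤ dμ s / dμ s' * (P ^ n) s s' := fun s =>
          mul_nonneg (div_nonneg (hdμpos s).le (hdμpos s').le) (hQ0 s s')
        have hcs : ((M ^ n *ᵥ x) s') ^ 2
            ≤ (∑ s, dμ s / dμ s' * (P ^ n) s s')
                * ∑ s, dμ s / dμ s' * (P ^ n) s s' * (x s) ^ 2 := by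
          rw [hentry]
          have hCS := Finset.sum_mul_sq_le_sq_mul_sq Finset.univ
            (fun s => Real.sqrt (dμ s / dμ s' * (P ^ n) s s'))
            (fun s => Real.sqrt (dμ s / dμ s' * (P ^ n) s s') * x s)
          calc (∑ s, dμ s / dμ s' * (P ^ n) s s' * x s) ^ 2
              = (∑ s, Real.sqrt (dμ s / dμ s' * (P ^ n) s s')
                  * (Real.sqrt (dμ s / dμ s' * (P ^ n) s s') * x s)) ^ 2 := by
                congr 1
                refine Finset.sum_congr rfl fun s _ => ?_
                rw [← mul_assoc, Real.mul_self_sqrt (ha0 s)]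
            _ ≤ (∑ s, Real.sqrt (dμ s / dμ s' * (P ^ n) s s') ^ 2)
                  * ∑ s, (Real.sqrt (dμ s / dμ s' * (P ^ n) s s') * x s) ^ 2 := hCS
            _ = (∑ s, dμ s / dμ s' * (P ^ n) s s')
                  * ∑ s, dμ s / dμ s' * (P ^ n) s s' * (x s) ^ 2 := by
                congr 1
                · exact Finset.sum_congr rfl fun s _ => Real.sq_sqrt (ha0 s)
                · refine Finset.sum_congr rfl fun s _ => ?_
                  rw [mul_pow, Real.sq_sqrt (ha0 s)]
        have hle : (∑ s, dμ s / dμ s' * (P ^ n) s s') ≤ K := by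
          rw [hK]
          exact Finset.le_sup'
            (fun s' => ∑ s, dμ s / dμ s' * (P ^ n) s s') (Finset.mem_univ s')
        refine hcs.trans (mul_le_mul_of_nonneg_right hle ?_)
        exact Finset.sum_nonneg fun s _ => mul_nonneg (ha0 s) (sq_nonneg _)
      calc ∑ s', dμ s' * ((M ^ n *ᵥ x) s') ^ 2
          ≤ ∑ s', dμ s' * (K * ∑ s, dμ s / dμ s' * (P ^ n) s s' * (x s) ^ 2) :=
            Finset.sum_le_sum fun s' _ => hpt s'
        _ = ∑ s', K * ∑ s, dμ s * (P ^ n) s s' * (x s) ^ 2 := by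
            refine Finset.sum_congr rfl fun s' _ => ?_
            rw [mul_left_comm]
            congr 1
            rw [Finset.mul_sum]
            refine Finset.sum_congr rfl fun s _ => ?_
            rw [show dμ s / dμ s' * (P ^ n) s s' * x s ^ 2
                  = dμ s * (P ^ n) s s' * x s ^ 2 / dμ s' from by ring,
              mul_comm, div_mul_cancel₀ _ (hdne s')]
        _ = K * ∑ s, dμ s * (x s) ^ 2 := by
            rw [← Finset.mul_sum, Finset.sum_comm]
            congr 1
            refine Finset.sum_congr rfl fun s _ => ?_
            calc ∑ s', dμ s * (P ^ n) s s' * (x s) ^ 2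
                = dμ s * (x s) ^ 2 * ∑ s', (P ^ n) s s' := by
                  rw [Finset.mul_sum]
                  exact Finset.sum_congr rfl fun s' _ => by ring
              _ = dμ s * (x s) ^ 2 := by rw [hQ1 s, mul_one]
    have hsq : ∑ s, dμ s * ((γ ^ n • (M ^ n *ᵥ x)) s) ^ 2
        = (γ ^ n) ^ 2 * ∑ s', dμ s' * ((M ^ n *ᵥ x) s') ^ 2 := by
      rw [Finset.mul_sum]
      refine Finset.sum_congr rfl fun s _ => ?_
      simp only [Pi.smul_apply, smul_eq_mul]
      ring
    rw [hnrm, hnrm, hsq]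
    calc Real.sqrt ((γ ^ n) ^ 2 * ∑ s', dμ s' * ((M ^ n *ᵥ x) s') ^ 2)
        = γ ^ n * Real.sqrt (∑ s', dμ s' * ((M ^ n *ᵥ x) s') ^ 2) := by
          rw [Real.sqrt_mul (sq_nonneg _), Real.sqrt_sq (pow_nonneg hγ0 n)]
      _ ≤ γ ^ n * Real.sqrt (K * ∑ s, dμ s * (x s) ^ 2) :=
          mul_le_mul_of_nonneg_left (Real.sqrt_le_sqrt hsum) (pow_nonneg hγ0 n)
      _ = γ ^ n * Real.sqrt K * Real.sqrt (∑ s, dμ s * (x s) ^ 2) := by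
          rw [Real.sqrt_mul hK0, mul_assoc]
  constructor
  · intro c
    have heq : Yγ^[n] c - (fun s => dhat s / dμ s)
        = γ ^ n • (M ^ n *ᵥ (c - fun s => dhat s / dμ s)) := by
      calc Yγ^[n] c - (fun s => dhat s / dμ s)
          = Yγ^[n] c - Yγ^[n] (fun s => dhat s / dμ s) := by rw [hff]
        _ = γ ^ n • (M ^ n *ᵥ (c - fun s => dhat s / dμ s)) := hiter n _ _
    rw [heq]
    exact hkey _
  · intro hγK
    refine ⟨fun c c' => ?_, ?_⟩
    · rw [hiter n c c']
      exact hkey _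
    · rcases lt_or_ge 0 K with hKpos | hKle
      · rcases eq_or_lt_of_le hγ0 with h0 | h0
        · rw [← h0, zero_pow (by omega : n ≠ 0), zero_mul]
          norm_num
        · have hnne : (n : ℝ) ≠ 0 := by
            have : (0 : ℝ) < n := by exact_mod_cast hn.trans_lt' (by norm_num)
            positivity
          have h1 : γ ^ n < (K ^ (-(1:ℝ) / (2 * (n : ℝ)))) ^ n :=
            pow_lt_pow_left₀ hγK hγ0 (by omega)
          have h2 : (K ^ (-(1:ℝ) / (2 * (n : ℝ)))) ^ n = K ^ (-(1:ℝ) / 2) := by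
            rw [← Real.rpow_natCast (K ^ (-(1:ℝ) / (2 * (n : ℝ)))) n,
              ← Real.rpow_mul hK0]
            congr 1
            field_simp
          calc γ ^ n * Real.sqrt K
              < K ^ (-(1:ℝ) / 2) * Real.sqrt K :=
                mul_lt_mul_of_pos_right (h2 ▸ h1) (Real.sqrt_pos.mpr hKpos)
            _ = 1 := by
                rw [Real.sqrt_eq_rpow, ← Real.rpow_add hKpos]
                norm_num
      · exfalso
        have hKz : K = 0 := le_antisymm hKle hK0
        rw [hKz, Real.zero_rpow ?_] at hγK
        · exact absurd hγK (not_lt.mpr hγ0)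
        · refine div_ne_zero (by norm_num) ?_
          have : (0 : ℝ) < n := by exact_mod_cast hn.trans_lt' (by norm_num)
          positivity
end

section
/- Let m ≥ 2 and let s_1, …, s_m be independent random variables, each distributed according to d_μ. Then the estimator (1/m) Σ_{i=1}^m ( (1/(m−1)) Σ_{j≠i} c(s_j) − 1 ) g(s_i) is an unbiased estimate of ∇L(c); that is, its expectation equals (Σ_{s∈S} d_μ(s) c(s) − 1) · Σ_{s∈S} d_μ(s) g(s). -/
open Finset

private lemma prod_ite_two' {m : ℕ} {i₀ j₀ : Fin m} (hij : i₀ ≠ j₀) (a b : Fin m → ℝ) :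
    ∏ i, (if i = i₀ then a i else if i = j₀ then b i else 1) = a i₀ * b j₀ := by
  rw [← Finset.mul_prod_erase Finset.univ _ (Finset.mem_univ i₀), if_pos rfl]
  congr 1
  rw [Finset.prod_congr rfl (fun i hi => if_neg (Finset.ne_of_mem_erase hi)),
    Finset.prod_ite_eq' (Finset.univ.erase i₀) j₀ b,
    if_pos (Finset.mem_erase.2 ⟨hij.symm, Finset.mem_univ _⟩)]

private lemma sum_pi_one {S : Type*} [Fintype S] (dμ : S → ℝ) (hd : ∑ s, dμ s = 1)
    (m : ℕ) (i₀ : Fin m) (h : S → ℝ) :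
    ∑ ω : Fin m → S, (∏ i, dμ (ω i)) * h (ω i₀) = ∑ s, dμ s * h s := by
  classical
  have e1 : ∀ ω : Fin m → S,
      (∏ i, dμ (ω i)) * h (ω i₀)
        = ∏ i, (dμ (ω i) * if i = i₀ then h (ω i) else 1) := by
    intro ω
    rw [Finset.prod_mul_distrib, Finset.prod_ite_eq' Finset.univ i₀ (fun i => h (ω i)),
      if_pos (Finset.mem_univ _)]
  simp only [e1]
  rw [← Fintype.piFinset_univ,
    ← Finset.prod_univ_sum (fun _ : Fin m => (Finset.univ : Finset S))
      (fun i s => dμ s * if i = i₀ then h s else 1)]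
  have e2 : ∀ i : Fin m, (∑ s, (dμ s * if i = i₀ then h s else 1))
      = if i = i₀ then ∑ s, dμ s * h s else 1 := by
    intro i
    by_cases hi : i = i₀ <;> simp [hi, hd]
  rw [Finset.prod_congr rfl (fun i _ => e2 i),
    Finset.prod_ite_eq' Finset.univ i₀ (fun _ => ∑ s, dμ s * h s), if_pos (Finset.mem_univ _)]

private lemma sum_pi_two {S : Type*} [Fintype S] (dμ : S → ℝ) (hd : ∑ s, dμ s = 1)
    (m : ℕ) (i₀ j₀ : Fin m) (hij : i₀ ≠ j₀) (h c : S → ℝ) :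
    ∑ ω : Fin m → S, (∏ i, dμ (ω i)) * (h (ω i₀) * c (ω j₀))
      = (∑ s, dμ s * h s) * (∑ s, dμ s * c s) := by
  classical
  have e1 : ∀ ω : Fin m → S,
      (∏ i, dμ (ω i)) * (h (ω i₀) * c (ω j₀))
        = ∏ i, (dμ (ω i) * if i = i₀ then h (ω i) else if i = j₀ then c (ω i) else 1) := by
    intro ω
    rw [Finset.prod_mul_distrib, prod_ite_two' hij]
  simp only [e1]
  rw [← Fintype.piFinset_univ,
    ← Finset.prod_univ_sum (fun _ : Fin m => (Finset.univ : Finset S))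
      (fun i s => dμ s * if i = i₀ then h s else if i = j₀ then c s else 1)]
  have e2 : ∀ i : Fin m, (∑ s, (dμ s * if i = i₀ then h s else if i = j₀ then c s else 1))
      = if i = i₀ then ∑ s, dμ s * h s else if i = j₀ then ∑ s, dμ s * c s else 1 := by
    intro i
    by_cases hi : i = i₀
    · simp [hi]
    · by_cases hj : i = j₀ <;> simp [hi, hj, hd]
  rw [Finset.prod_congr rfl (fun i _ => e2 i), prod_ite_two' hij]

/-- The batch estimator is an unbiased estimate of the gradient of the
normalization loss (Theorem 10). The expectation over the i.i.d. samples
`s₁, …, s_m ~ dμ` is written out as a sum over all tuples `ω : Fin m → S`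
weighted by the product probability `∏ i, dμ (ω i)`. -/
theorem gradient_estimate_normalization
    {S : Type*} [Fintype S] [Nonempty S]
    -- `dμ` is a probability distribution on `S`
    (dμ : S → ℝ) (hdμ0 : ∀ s, 0 ≤ dμ s) (hdμsum : ∑ s, dμ s = 1)
    -- `c` is the function being normalized and `g s = ∇c(s)` its parameter gradient
    (k : ℕ) (c : S → ℝ) (g : S → Fin k → ℝ)
    -- batch size `m ≥ 2`
    (m : ℕ) (hm : 2 ≤ m) :
    ∑ ω : Fin m → S, (∏ i, dμ (ω i)) •
        ((m : ℝ)⁻¹ • ∑ i : Fin m,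
          ((((m : ℝ) - 1)⁻¹ * ∑ j ∈ Finset.univ.erase i, c (ω j)) - 1) • g (ω i))
      = ((∑ s, dμ s * c s) - 1) • ∑ s, dμ s • g s := by
  classical
  have hm2 : (2:ℝ) ≤ (m:ℝ) := by exact_mod_cast hm
  have hm1 : ((m:ℝ) - 1) ≠ 0 := by linarith
  have hm0 : (m:ℝ) ≠ 0 := by linarith
  funext x
  simp only [Finset.sum_apply, Pi.smul_apply, smul_eq_mul]
  set A := ∑ s, dμ s * c s with hA
  set H := ∑ s, dμ s * g s x with hH
  -- key per-index expectation
  have key : ∀ i : Fin m,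
      (∑ ω : Fin m → S, (∏ i', dμ (ω i')) *
        (((((m : ℝ) - 1)⁻¹ * ∑ j ∈ Finset.univ.erase i, c (ω j)) - 1) * g (ω i) x))
      = (A - 1) * H := by
    intro i
    have expand : ∀ ω : Fin m → S,
        (∏ i', dμ (ω i')) *
          (((((m : ℝ) - 1)⁻¹ * ∑ j ∈ Finset.univ.erase i, c (ω j)) - 1) * g (ω i) x)
        = ((m : ℝ) - 1)⁻¹ *
            ∑ j ∈ Finset.univ.erase i, (∏ i', dμ (ω i')) * (g (ω i) x * c (ω j))
          - (∏ i', dμ (ω i')) * g (ω i) x := by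
      intro ω
      rw [Finset.mul_sum, Finset.mul_sum]
      ring_nf
      rw [Finset.mul_sum]
      ring_nf
      congr 1
      rw [Finset.sum_mul]
      exact Finset.sum_congr rfl fun j _ => by ring
    rw [Finset.sum_congr rfl (fun ω _ => expand ω), Finset.sum_sub_distrib,
      ← Finset.mul_sum, Finset.sum_comm]
    have inner : ∀ j ∈ Finset.univ.erase i,
        (∑ ω : Fin m → S, (∏ i', dμ (ω i')) * (g (ω i) x * c (ω j))) = H * A := by
      intro j hj
      exact sum_pi_two dμ hdμsum m i j (Ne.symm (Finset.ne_of_mem_erase hj))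
        (fun s => g s x) c
    rw [Finset.sum_congr rfl inner, Finset.sum_const, Finset.card_erase_of_mem (Finset.mem_univ _),
      Finset.card_univ, Fintype.card_fin, sum_pi_one dμ hdμsum m i (fun s => g s x)]
    have hcard : ((m - 1 : ℕ) : ℝ) = (m : ℝ) - 1 := by
      have : (1:ℕ) ≤ m := le_trans (by norm_num) hm
      push_cast [this]
      ring
    rw [nsmul_eq_mul, hcard]
    field_simp
    ring
  -- now assemble
  have swap : (∑ ω : Fin m → S, (∏ i, dμ (ω i)) *
      ((m : ℝ)⁻¹ * ∑ i : Fin m,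
        ((((m : ℝ) - 1)⁻¹ * ∑ j ∈ Finset.univ.erase i, c (ω j)) - 1) * g (ω i) x))
    = (m : ℝ)⁻¹ * ∑ i : Fin m, ∑ ω : Fin m → S, (∏ i', dμ (ω i')) *
        (((((m : ℝ) - 1)⁻¹ * ∑ j ∈ Finset.univ.erase i, c (ω j)) - 1) * g (ω i) x) := by
    simp only [mul_left_comm _ ((m:ℝ)⁻¹)]
    rw [← Finset.mul_sum]
    congr 1
    rw [Finset.sum_congr rfl (fun ω _ => by rw [Finset.mul_sum]), Finset.sum_comm]
  rw [swap, Finset.sum_congr rfl (fun i _ => key i), Finset.sum_const, Finset.card_univ,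
    Fintype.card_fin, nsmul_eq_mul]
  field_simp
end

section
/- Suppose the matrix powers P_π^k and P_μ^k converge to the zero matrix as k → ∞, let s₀ ∈ S, let d_0 ∈ ℝ^S be the indicator vector of s₀, and suppose s₀ cannot be returned to: P_π(s₀|s) = 0 and P_μ(s₀|s) = 0 for all s ∈ S. Define the visitation vectors d_π = Σ_{i=0}^∞ (P_π^T)^i d_0 and d_μ = Σ_{i=0}^∞ (P_μ^T)^i d_0, and assume d_μ(s) > 0 for all s ∈ S. Then the ratio vector d_π/d_μ, with entries d_π(s)/d_μ(s), is the unique fixed point of the episodic COP operator Y c = D_{d_μ}^{-1} P_π^T D_{d_μ} c + d_0; that is, Y(d_π/d_μ) = d_π/d_μ, and any c ∈ ℝ^S with Y c = c equals d_π/d_μ. -/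
/-!
The visitation vector `dπ` is the Neumann series of `d₀` under `Pπᵀ`, so it solves
`dπ = Pπᵀ dπ + d₀`, and since `Pπᵀ ^ k → 0` this affine equation has no other solution.
Conjugating by `D = D_{dμ}` turns `Y c = c` into exactly this equation for `D c`, provided
`D d₀ = d₀`; that holds because `s₀` cannot be returned to, which forces `dμ s₀ = d₀ s₀ = 1`.
-/

open Matrix Filter Topology

namespace Matrix

variable {n R : Type*} [Fintype n] [DecidableEq n] [Ring R]

theorem conj_mulVec_add_eq_self_iff {A D D' : Matrix n n R} {b c : n → R}
    (hDD' : D * D' = 1) (hD'D : D' * D = 1) (hb : D *ᵥ b = b) :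
    (D' * A * D) *ᵥ c + b = c ↔ A *ᵥ (D *ᵥ c) + b = D *ᵥ c := by
  have hD'b : D' *ᵥ b = b := by
    conv_lhs => rw [← hb, mulVec_mulVec, hD'D, one_mulVec]
  constructor
  · intro h
    conv_rhs => rw [← h, mulVec_add, hb, mulVec_mulVec, ← mul_assoc, ← mul_assoc, hDD', one_mul,
      ← mulVec_mulVec]
  · intro h
    conv_rhs => rw [← one_mulVec c, ← hD'D, ← mulVec_mulVec, ← h, mulVec_add, hD'b,
      mulVec_mulVec, mulVec_mulVec]

variable [TopologicalSpace R] [IsTopologicalRing R] [T2Space R]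

theorem mulVec_add_eq_of_hasSum_pow_mulVec {A : Matrix n n R} {b d : n → R}
    (h : HasSum (fun i : ℕ => (A ^ i) *ᵥ b) d) : A *ᵥ d + b = d := by
  have hshift : HasSum (fun i : ℕ => (A ^ (i + 1)) *ᵥ b) (d - b) := by
    simpa using (hasSum_nat_add_iff' 1).mpr h
  have hA : HasSum (fun i : ℕ => A *ᵥ ((A ^ i) *ᵥ b)) (A *ᵥ d) :=
    h.map (AddMonoidHom.mk' (A *ᵥ ·) (mulVec_add A)) (continuous_const.matrix_mulVec continuous_id)
  simp only [mulVec_mulVec, ← pow_succ'] at hA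
  rw [hA.unique hshift, sub_add_cancel]

theorem apply_eq_of_hasSum_pow_mulVec_of_row_eq_zero {A : Matrix n n R} {b d : n → R}
    {s₀ : n} (hrow : ∀ s, A s₀ s = 0) (h : HasSum (fun i : ℕ => (A ^ i) *ᵥ b) d) :
    d s₀ = b s₀ := by
  have hAd : (A *ᵥ d) s₀ = 0 := by simp [mulVec, dotProduct, hrow]
  rw [← mulVec_add_eq_of_hasSum_pow_mulVec h, Pi.add_apply, hAd, zero_add]

theorem eq_zero_of_mulVec_eq_self_of_tendsto_pow {A : Matrix n n R} {v : n → R}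
    (hA : Tendsto (fun k => A ^ k) atTop (𝓝 0)) (hv : A *ᵥ v = v) : v = 0 := by
  have hpow : ∀ k : ℕ, (A ^ k) *ᵥ v = v := by
    intro k
    induction k with
    | zero => exact one_mulVec v
    | succ k ih => rw [pow_succ, ← mulVec_mulVec, hv, ih]
  have hlim : Tendsto (fun k => (A ^ k) *ᵥ v) atTop (𝓝 ((0 : Matrix n n R) *ᵥ v)) :=
    ((continuous_id.matrix_mulVec continuous_const).tendsto _).comp hA
  simp only [hpow, zero_mulVec] at hlim
  exact tendsto_nhds_unique tendsto_const_nhds hlim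

theorem eq_of_mulVec_add_eq_self_of_tendsto_pow {A : Matrix n n R} {b v w : n → R}
    (hA : Tendsto (fun k => A ^ k) atTop (𝓝 0)) (hv : A *ᵥ v + b = v) (hw : A *ᵥ w + b = w) :
    v = w := by
  refine sub_eq_zero.mp (eq_zero_of_mulVec_eq_self_of_tendsto_pow hA ?_)
  rw [mulVec_sub]
  conv_rhs => rw [← hv, ← hw]
  abel

end Matrix

theorem episodic_cop_fixed_point_general
    {S : Type*} [Fintype S] [DecidableEq S]
    -- `Pπ`, `Pμ` are row-substochastic matrices (entry `P s s'` is `P(s' | s)`)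
    (Pπ Pμ : Matrix S S ℝ)
    -- episodic condition: the powers of `Pπ` and `Pμ` converge to the zero matrix
    (hPπpow : Tendsto (fun k => Pπ ^ k) atTop (𝓝 0))
    -- single starting state `s₀`, with indicator starting distribution `d₀`
    (s0 : S) (d0 : S → ℝ) (hd0 : d0 = fun s => if s = s0 then 1 else 0)
    -- `s₀` cannot be returned to
    (hnoretμ : ∀ s, Pμ s s0 = 0)
    -- visitation vectors `dπ = ∑ᵢ (Pπᵀ)ⁱ d₀` and `dμ = ∑ᵢ (Pμᵀ)ⁱ d₀`
    (dπ dμ : S → ℝ)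
    (hdπ : HasSum (fun i : ℕ => (Pπᵀ ^ i) *ᵥ d0) dπ)
    (hdμ : HasSum (fun i : ℕ => (Pμᵀ ^ i) *ᵥ d0) dμ)
    (hdμpos : ∀ s, 0 < dμ s)
    -- the episodic COP operator `Y c = D_{dμ}⁻¹ Pπᵀ D_{dμ} c + d₀`
    (Y : (S → ℝ) → (S → ℝ))
    (hY : ∀ c, Y c =
      (Matrix.diagonal (fun s => (dμ s)⁻¹) * Pπᵀ * Matrix.diagonal dμ) *ᵥ c + d0) :
    -- `dπ/dμ` is a fixed point of `Y`, and it is the unique one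
    Y (fun s => dπ s / dμ s) = (fun s => dπ s / dμ s) ∧
    ∀ c : S → ℝ, Y c = c → c = fun s => dπ s / dμ s := by
  have hdμ0 : ∀ s, dμ s ≠ 0 := fun s => (hdμpos s).ne'
  have hdμs0 : dμ s0 = 1 := by
    simpa [hd0] using apply_eq_of_hasSum_pow_mulVec_of_row_eq_zero hnoretμ hdμ
  have hDd0 : diagonal dμ *ᵥ d0 = d0 := by
    funext s
    by_cases hs : s = s0 <;> simp [mulVec_diagonal, hd0, hs, hdμs0]
  have hYfix : ∀ c, Y c = c ↔ Pπᵀ *ᵥ (diagonal dμ *ᵥ c) + d0 = diagonal dμ *ᵥ c := fun c => by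
    rw [hY]
    refine conj_mulVec_add_eq_self_iff ?_ ?_ hDd0 <;>
      simp [diagonal_mul_diagonal, hdμ0, ← diagonal_one]
  have hratio : diagonal dμ *ᵥ (fun s => dπ s / dμ s) = dπ := by
    funext s
    simp [mulVec_diagonal, mul_div_cancel₀ _ (hdμ0 s)]
  have hdπfix : Pπᵀ *ᵥ dπ + d0 = dπ := mulVec_add_eq_of_hasSum_pow_mulVec hdπ
  have hPπTpow : Tendsto (fun k => Pπᵀ ^ k) atTop (𝓝 0) := by
    have := (continuous_id.matrix_transpose.tendsto (0 : Matrix S S ℝ)).comp hPπpow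
    simpa only [Function.comp_def, id, transpose_pow, transpose_zero] using this
  refine ⟨(hYfix _).2 (by rw [hratio]; exact hdπfix), fun c hc => ?_⟩
  have hDc : diagonal dμ *ᵥ c = dπ :=
    eq_of_mulVec_add_eq_self_of_tendsto_pow hPπTpow ((hYfix c).1 hc) hdπfix
  funext s
  rw [eq_div_iff (hdμ0 s), mul_comm, ← mulVec_diagonal, hDc]

/-- Episodic COP operator: under the single-starting-state assumption, the ratio
`dπ/dμ` of visitation vectors is the unique fixed point of
`Y c = D_{dμ}⁻¹ Pπᵀ D_{dμ} c + d₀`. -/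
theorem episodic_cop_fixed_point
    {S : Type*} [Fintype S] [Nonempty S] [DecidableEq S]
    -- `Pπ`, `Pμ` are row-substochastic matrices (entry `P s s'` is `P(s' | s)`)
    (Pπ Pμ : Matrix S S ℝ)
    (hPπ0 : ∀ s s', 0 ≤ Pπ s s') (hPπ1 : ∀ s, ∑ s', Pπ s s' ≤ 1)
    (hPμ0 : ∀ s s', 0 ≤ Pμ s s') (hPμ1 : ∀ s, ∑ s', Pμ s s' ≤ 1)
    -- episodic condition: the powers of `Pπ` and `Pμ` converge to the zero matrix
    (hPπpow : Tendsto (fun k => Pπ ^ k) atTop (𝓝 0))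
    (hPμpow : Tendsto (fun k => Pμ ^ k) atTop (𝓝 0))
    -- single starting state `s₀`, with indicator starting distribution `d₀`
    (s0 : S) (d0 : S → ℝ) (hd0 : d0 = fun s => if s = s0 then 1 else 0)
    -- `s₀` cannot be returned to
    (hnoretπ : ∀ s, Pπ s s0 = 0) (hnoretμ : ∀ s, Pμ s s0 = 0)
    -- visitation vectors `dπ = ∑ᵢ (Pπᵀ)ⁱ d₀` and `dμ = ∑ᵢ (Pμᵀ)ⁱ d₀`
    (dπ dμ : S → ℝ)
    (hdπ : HasSum (fun i : ℕ => (Pπᵀ ^ i) *ᵥ d0) dπ)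
    (hdμ : HasSum (fun i : ℕ => (Pμᵀ ^ i) *ᵥ d0) dμ)
    (hdμpos : ∀ s, 0 < dμ s)
    -- the episodic COP operator `Y c = D_{dμ}⁻¹ Pπᵀ D_{dμ} c + d₀`
    (Y : (S → ℝ) → (S → ℝ))
    (hY : ∀ c, Y c =
      (Matrix.diagonal (fun s => (dμ s)⁻¹) * Pπᵀ * Matrix.diagonal dμ) *ᵥ c + d0) :
    -- `dπ/dμ` is a fixed point of `Y`, and it is the unique one
    Y (fun s => dπ s / dμ s) = (fun s => dπ s / dμ s) ∧
    ∀ c : S → ℝ, Y c = c → c = fun s => dπ s / dμ s :=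
  episodic_cop_fixed_point_general Pπ Pμ hPπpow s0 d0 hd0 hnoretμ dπ dμ hdπ hdμ hdμpos Y hY
end
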